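/- arXiv:2605.30466 — 6 statements merged into one kernel-verified Lean document; each statement's English description precedes it below -/
import Mathlib

section
/- Let q be a prime power and R = 𝔽_q[t]. Let P be a set of Mersenne irreducibles of R, i.e., each p ∈ P is irreducible and of the form p = 1 + t + t² + ⋯ + t^{l−1} for some l ∈ ℕ. For M ∈ ℕ let P_M = {p ∈ P : p = ∑_{k=0}^{l−1} t^k for some l ≤ M} and A_M = ∏_{p∈P_M} N(p)/(1 + N(p)). Then A_M ≥ ∏_{p∈P} N(p)/(1 + N(p)) ≥ A_M · exp(−1/((q−1) q^{M−1})), where the (possibly infinite) product over P is the infimum over finite subsets Q ⊆ P of ∏_{p∈Q} N(p)/(1 + N(p)). -/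
open Polynomial Filter
open scoped Classical

/-- The norm `N(f) = q ^ deg f` for `f ≠ 0`, `N(0) = 0`, on `𝔽_q[t]`. -/
noncomputable def polyNorm (F : Type*) [Field F] [Fintype F] (f : F[X]) : ℕ :=
  if f = 0 then 0 else Fintype.card F ^ f.natDegree

/-- `F_n = {x : N(x) < n}`. -/
def polyFn (F : Type*) [Field F] [Fintype F] (n : ℕ) : Set F[X] :=
  {x | polyNorm F x < n}

/-- `A` has density `L` if `|A ∩ F_n| / |F_n| → L`. -/
def polyHasDensity (F : Type*) [Field F] [Fintype F] (A : Set F[X]) (L : ℝ) : Prop :=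
  Tendsto (fun n : ℕ => ((A ∩ polyFn F n).ncard : ℝ) / ((polyFn F n).ncard : ℝ))
    atTop (nhds L)

/-- Squarefree: nonzero, not a unit, and divisible by no square of an irreducible. -/
def polyIsSqfree (F : Type*) [Field F] [Fintype F] (r : F[X]) : Prop :=
  r ≠ 0 ∧ ¬ IsUnit r ∧ ∀ b : F[X], Irreducible b → ¬ b ^ 2 ∣ r

/-- `S_R(T,P)`: squarefree elements divisible by every element of `T` and no element of `P`. -/
def polySRTP (F : Type*) [Field F] [Fintype F] (T P : Set F[X]) : Set F[X] :=
  {s | polyIsSqfree F s ∧ (∀ t ∈ T, t ∣ s) ∧ (∀ p ∈ P, ¬ p ∣ s)}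

/-- The (possibly infinite) product `∏_{p ∈ P} N(p)/(1+N(p))`, as the infimum over
finite subsets `Q ⊆ P` of the corresponding finite products. -/
noncomputable def polyPprod (F : Type*) [Field F] [Fintype F] (P : Set F[X]) : ℝ :=
  sInf {x : ℝ | ∃ Q : Finset F[X], ↑Q ⊆ P ∧
    x = ∏ p ∈ Q, (polyNorm F p : ℝ) / (1 + (polyNorm F p : ℝ))}

/-- degree of geometric sum -/
lemma geom_natDegree (F : Type*) [Field F] {l : ℕ} (hl : 1 ≤ l) :
    (∑ k ∈ Finset.range l, (X : F[X]) ^ k).natDegree = l - 1 := by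
  induction l with
  | zero => omega
  | succ n ih =>
    rcases Nat.eq_or_lt_of_le hl with h | h
    · simp [← h]
    · have hn : 1 ≤ n := by omega
      rw [Finset.sum_range_succ, natDegree_add_eq_right_of_natDegree_lt]
      · simp
      · rw [ih hn, natDegree_X_pow]; omega

lemma term_bound {x : ℝ} (hx : 1 ≤ x) : Real.exp (-(1 / x)) ≤ x / (1 + x) := by
  have hx0 : 0 < x := lt_of_lt_of_le one_pos hx
  have h1 : x / (1 + x) = (1 / x + 1)⁻¹ := by
    have hx1 : (0:ℝ) < 1 + x := by linarith
    field_simp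
  rw [Real.exp_neg, h1]
  have h2 : (0:ℝ) < 1 / x + 1 := by positivity
  exact inv_anti₀ h2 (Real.add_one_le_exp _)

lemma pprod_set_nonempty (F : Type*) [Field F] [Fintype F] (P : Set F[X]) :
    Set.Nonempty {x : ℝ | ∃ Q : Finset F[X], ↑Q ⊆ P ∧
      x = ∏ p ∈ Q, (polyNorm F p : ℝ) / (1 + (polyNorm F p : ℝ))} :=
  ⟨1, ∅, by simp, by simp⟩

lemma pprod_nonneg (F : Type*) [Field F] [Fintype F] (P : Set F[X]) :
    0 ≤ polyPprod F P := by
  apply le_csInf (pprod_set_nonempty F P)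
  rintro x ⟨Q, -, rfl⟩
  exact Finset.prod_nonneg fun p _ => by positivity

lemma pprod_bddBelow (F : Type*) [Field F] [Fintype F] (P : Set F[X]) :
    BddBelow {x : ℝ | ∃ Q : Finset F[X], ↑Q ⊆ P ∧
      x = ∏ p ∈ Q, (polyNorm F p : ℝ) / (1 + (polyNorm F p : ℝ))} := by
  refine ⟨0, ?_⟩
  rintro x ⟨Q, -, rfl⟩
  exact Finset.prod_nonneg fun p _ => by positivity

theorem mersenne_tail_product_bound (F : Type*) [Field F] [Fintype F]
    (P : Set F[X])
    (hP : ∀ p ∈ P, Irreducible p ∧ ∃ l : ℕ, p = ∑ k ∈ Finset.range l, X ^ k)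
    (M : ℕ) :
    polyPprod F P ≤
      polyPprod F {p ∈ P | ∃ l ≤ M, p = ∑ k ∈ Finset.range l, X ^ k} ∧
    polyPprod F {p ∈ P | ∃ l ≤ M, p = ∑ k ∈ Finset.range l, X ^ k} *
        Real.exp (-(1 / (((Fintype.card F : ℝ) - 1) *
          (Fintype.card F : ℝ) ^ ((M : ℝ) - 1)))) ≤ polyPprod F P := by
  set q : ℝ := (Fintype.card F : ℝ) with hqdef
  have hq2 : (2:ℝ) ≤ q := by
    have h : 1 < Fintype.card F := Fintype.one_lt_card
    rw [hqdef]; exact_mod_cast h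
  have hq0 : (0:ℝ) < q := by linarith
  set PM : Set F[X] := {p ∈ P | ∃ l ≤ M, p = ∑ k ∈ Finset.range l, X ^ k} with hPM
  constructor
  · apply csInf_le_csInf (pprod_bddBelow F P) (pprod_set_nonempty F PM)
    rintro x ⟨Q, hQ, rfl⟩
    exact ⟨Q, fun p hp => (hQ hp).1, rfl⟩
  · apply le_csInf (pprod_set_nonempty F P)
    rintro x ⟨Q, hQP, rfl⟩
    set pred : F[X] → Prop := fun p => ∃ l ≤ M, p = ∑ k ∈ Finset.range l, X ^ k with hpred
    rw [← Finset.prod_filter_mul_prod_filter_not Q pred]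
    set Q₁ := Q.filter pred
    set Q₂ := Q.filter fun p => ¬ pred p
    -- facts about Q₂
    have hQ₂ : ∀ p ∈ Q₂, p ≠ 0 ∧ M ≤ p.natDegree := by
      intro p hp
      rw [Finset.mem_filter] at hp
      obtain ⟨hpQ, hnp⟩ := hp
      obtain ⟨hirr, l, hl⟩ := hP p (hQP hpQ)
      have hl1 : 2 ≤ l := by
        by_contra h
        interval_cases l
        · rw [hl] at hirr; simp at hirr
        · rw [hl] at hirr; simp at hirr
      have hdeg : p.natDegree = l - 1 := by rw [hl]; exact geom_natDegree F (by omega)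
      have hlM : M < l := by
        by_contra h
        exact hnp ⟨l, by omega, hl⟩
      exact ⟨hirr.ne_zero, by omega⟩
    -- injectivity of natDegree on Q₂
    have hinj : ∀ p ∈ Q₂, ∀ p' ∈ Q₂, p.natDegree = p'.natDegree → p = p' := by
      intro p hp p' hp'
      rw [Finset.mem_filter] at hp hp'
      obtain ⟨hirr, l, hl⟩ := hP p (hQP hp.1)
      obtain ⟨hirr', l', hl'⟩ := hP p' (hQP hp'.1)
      have h1 : 1 ≤ l := by
        rcases Nat.eq_zero_or_pos l with h | h
        · rw [h] at hl; simp at hl; rw [hl] at hirr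
          exact absurd hirr not_irreducible_zero
        · exact h
      have h1' : 1 ≤ l' := by
        rcases Nat.eq_zero_or_pos l' with h | h
        · rw [h] at hl'; simp at hl'; rw [hl'] at hirr'
          exact absurd hirr' not_irreducible_zero
        · exact h
      have hd : p.natDegree = l - 1 := by rw [hl]; exact geom_natDegree F h1
      have hd' : p'.natDegree = l' - 1 := by rw [hl']; exact geom_natDegree F h1'
      intro h
      have : l = l' := by omega
      rw [hl, hl', this]
    -- bound the Q₂ product
    have h2 : Real.exp (-(1 / ((q - 1) * q ^ ((M:ℝ) - 1)))) ≤
        ∏ p ∈ Q₂, (polyNorm F p : ℝ) / (1 + (polyNorm F p : ℝ)) := by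
      have step1 : ∏ p ∈ Q₂, Real.exp (-((1/q) ^ p.natDegree)) ≤
          ∏ p ∈ Q₂, (polyNorm F p : ℝ) / (1 + (polyNorm F p : ℝ)) := by
        apply Finset.prod_le_prod (fun p _ => (Real.exp_pos _).le)
        intro p hp
        obtain ⟨hp0, hpM⟩ := hQ₂ p hp
        have hN : (polyNorm F p : ℝ) = q ^ p.natDegree := by
          rw [polyNorm, if_neg hp0]; push_cast; rfl
        have h1N : (1:ℝ) ≤ (polyNorm F p : ℝ) := by
          rw [hN]; exact one_le_pow₀ (by linarith)
        have h1q : (1:ℝ) ≤ q ^ p.natDegree := one_le_pow₀ (by linarith)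
        rw [hN, one_div, inv_pow, ← one_div]
        exact term_bound h1q
      refine le_trans ?_ step1
      rw [← Real.exp_sum, Real.exp_le_exp, Finset.sum_neg_distrib, neg_le_neg_iff]
      -- sum of (1/q)^deg ≤ ε
      have hsum : ∑ p ∈ Q₂, (1/q) ^ p.natDegree =
          ∑ d ∈ Q₂.image Polynomial.natDegree, (1/q) ^ d :=
        (Finset.sum_image fun p hp p' hp' h => hinj p hp p' hp' h).symm
      rw [hsum]
      set D := Q₂.image Polynomial.natDegree with hD
      have hDM : ∀ d ∈ D, M ≤ d := by
        intro d hd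
        obtain ⟨p, hp, rfl⟩ := Finset.mem_image.mp hd
        exact (hQ₂ p hp).2
      have hgeo : ∑ e ∈ D.image (· - M), (1/q) ^ (M + e) = ∑ d ∈ D, (1/q) ^ d := by
        rw [Finset.sum_image (g := fun d => d - M) (by
          intro d hd d' hd' h
          simp only at h
          have := hDM d hd; have := hDM d' hd'
          omega)]
        refine Finset.sum_congr rfl fun d hd => ?_
        have := hDM d hd
        congr 1
        omega
      rw [← hgeo]
      have hr0 : (0:ℝ) ≤ 1/q := by positivity
      have hr1 : (1:ℝ)/q < 1 := by rw [div_lt_one hq0]; linarith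
      have hsummable : Summable (fun e : ℕ => (1/q) ^ (M + e)) := by
        simp_rw [pow_add]
        exact (summable_geometric_of_lt_one hr0 hr1).mul_left _
      have := Summable.sum_le_tsum (D.image (· - M)) (fun e _ => by positivity) hsummable
      refine le_trans this ?_
      have htsum : ∑' e : ℕ, (1/q) ^ (M + e) = (1/q)^M * (1 - 1/q)⁻¹ := by
        simp_rw [pow_add]
        rw [tsum_mul_left, tsum_geometric_of_lt_one hr0 hr1]
      rw [htsum]
      have hrpow : q ^ ((M:ℝ) - 1) = q ^ M / q := by
        rw [Real.rpow_sub hq0, Real.rpow_natCast, Real.rpow_one]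
      rw [hrpow]
      have hq1 : q - 1 ≠ 0 := by linarith
      have hqne : q ≠ 0 := by linarith
      have hqM : (q:ℝ) ^ M ≠ 0 := by positivity
      have h11 : (1:ℝ) - 1/q ≠ 0 := by linarith
      have hkey : (1/q)^M * (1 - 1/q)⁻¹ = 1/((q-1)*(q^M/q)) := by
        rw [div_pow]
        field_simp
        ring_nf
        try exact Or.inl trivial
        try tauto
      rw [hkey]
    -- bound the Q₁ product
    have h1 : polyPprod F PM ≤ ∏ p ∈ Q₁, (polyNorm F p : ℝ) / (1 + (polyNorm F p : ℝ)) := by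
      apply csInf_le (pprod_bddBelow F PM)
      refine ⟨Q₁, ?_, rfl⟩
      intro p hp
      rw [Finset.mem_coe, Finset.mem_filter] at hp
      exact ⟨hQP hp.1, hp.2⟩
    calc polyPprod F PM * Real.exp (-(1 / ((q - 1) * q ^ ((M:ℝ) - 1))))
        ≤ (∏ p ∈ Q₁, (polyNorm F p : ℝ) / (1 + (polyNorm F p : ℝ))) *
          (∏ p ∈ Q₂, (polyNorm F p : ℝ) / (1 + (polyNorm F p : ℝ))) := by
          apply mul_le_mul h1 h2 (Real.exp_pos _).le
          exact Finset.prod_nonneg fun p _ => by positivity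
      _ = _ := rfl
end

section
/- Let D be a positive squarefree integer with D ≢ 3 (mod 4) and R = ℤ[√−D]. Let M ∈ ℕ satisfy (1+D)^{M/2} − 1 ≥ (1+D)^{(M−1)/2}. Let P be a set of Mersenne irreducibles of R, i.e., each p ∈ P is irreducible and of the form p = ∑_{k=0}^{l−1} (1 + √−D)^k for some l ∈ ℕ. Let P_M = {p ∈ P : p = ∑_{k=0}^{l−1} (1+√−D)^k for some l ≤ M} and A_M = ∏_{p∈P_M} N(p)/(1 + N(p)). Then A_M ≥ ∏_{p∈P} N(p)/(1 + N(p)) ≥ A_M · exp(−(1+D)^{1−M}), where the (possibly infinite) product over P is the infimum over finite subsets Q ⊆ P of ∏_{p∈Q} N(p)/(1 + N(p)). -/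
open Filter

/-- The norm `N(a + b√−D) = a² + D b²` on `ℤ[√−D]`. -/
def zNorm (D : ℕ) (x : ℤ√(-(D : ℤ))) : ℕ :=
  (x.re ^ 2 + (D : ℤ) * x.im ^ 2).toNat

/-- `F_n = {x : N(x) < n}`. -/
def zFn (D n : ℕ) : Set (ℤ√(-(D : ℤ))) := {x | zNorm D x < n}

/-- `A` has density `L` if `|A ∩ F_n| / |F_n| → L`. -/
def zHasDensity (D : ℕ) (A : Set (ℤ√(-(D : ℤ)))) (L : ℝ) : Prop :=
  Tendsto (fun n : ℕ => ((A ∩ zFn D n).ncard : ℝ) / ((zFn D n).ncard : ℝ))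
    atTop (nhds L)

/-- Squarefree: nonzero, not a unit, and divisible by no square of an irreducible. -/
def zIsSqfree (D : ℕ) (r : ℤ√(-(D : ℤ))) : Prop :=
  r ≠ 0 ∧ ¬ IsUnit r ∧ ∀ b : ℤ√(-(D : ℤ)), Irreducible b → ¬ b ^ 2 ∣ r

/-- `S_R(T,P)`: squarefree elements divisible by every element of `T` and no element of `P`. -/
def zSRTP (D : ℕ) (T P : Set (ℤ√(-(D : ℤ)))) : Set (ℤ√(-(D : ℤ))) :=
  {s | zIsSqfree D s ∧ (∀ t ∈ T, t ∣ s) ∧ (∀ p ∈ P, ¬ p ∣ s)}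

/-- The (possibly infinite) product `∏_{p ∈ P} N(p)/(1+N(p))`, as the infimum over
finite subsets `Q ⊆ P` of the corresponding finite products. -/
noncomputable def zPprod (D : ℕ) (P : Set (ℤ√(-(D : ℤ)))) : ℝ :=
  sInf {x : ℝ | ∃ Q : Finset (ℤ√(-(D : ℤ))), ↑Q ⊆ P ∧
    x = ∏ p ∈ Q, (zNorm D p : ℝ) / (1 + (zNorm D p : ℝ))}

lemma zNorm_cast (D : ℕ) (x : ℤ√(-(D : ℤ))) : (zNorm D x : ℤ) = Zsqrtd.norm x := by
  unfold zNorm Zsqrtd.norm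
  rw [Int.toNat_of_nonneg (by positivity)]
  ring

lemma zNorm_mul (D : ℕ) (x y : ℤ√(-(D : ℤ))) :
    zNorm D (x * y) = zNorm D x * zNorm D y := by
  have : (zNorm D (x * y) : ℤ) = (zNorm D x : ℤ) * zNorm D y := by
    rw [zNorm_cast, zNorm_cast, zNorm_cast, Zsqrtd.norm_mul]
  exact_mod_cast this

lemma zNorm_one_add_sqrtd (D : ℕ) : zNorm D (1 + Zsqrtd.sqrtd) = 1 + D := by
  unfold zNorm
  simp
  omega

lemma zNorm_sqrtd (D : ℕ) : zNorm D Zsqrtd.sqrtd = D := by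
  unfold zNorm
  simp

lemma zNorm_pos (D : ℕ) (hD : 0 < D) (x : ℤ√(-(D : ℤ))) (hx : x ≠ 0) :
    1 ≤ zNorm D x := by
  rcases Nat.eq_zero_or_pos (zNorm D x) with h | h
  · exfalso
    have h' : (x.re ^ 2 + (D : ℤ) * x.im ^ 2) = 0 := by
      have := zNorm_cast D x
      unfold Zsqrtd.norm at this
      have h0 : (zNorm D x : ℤ) = 0 := by exact_mod_cast h
      nlinarith [this]
    have hre : x.re = 0 := by nlinarith [sq_nonneg x.re, sq_nonneg x.im, (by exact_mod_cast hD : (0:ℤ) < D)]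
    have him : x.im = 0 := by nlinarith [sq_nonneg x.re, sq_nonneg x.im, (by exact_mod_cast hD : (0:ℤ) < D)]
    exact hx (Zsqrtd.ext_iff.mpr ⟨hre, him⟩)
  · exact h

-- N(y-1) ≥ (√N(y) - 1)^2
lemma zNorm_sub_one (D : ℕ) (y : ℤ√(-(D : ℤ))) :
    (Real.sqrt (zNorm D y) - 1) ^ 2 ≤ (zNorm D (y - 1) : ℝ) := by
  have hz : (zNorm D (y - 1) : ℤ) = (zNorm D y : ℤ) - 2 * y.re + 1 := by
    rw [zNorm_cast, zNorm_cast]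
    simp [Zsqrtd.norm]
    ring
  have hr : (zNorm D (y - 1) : ℝ) = (zNorm D y : ℝ) - 2 * y.re + 1 := by
    exact_mod_cast hz
  set n : ℝ := (zNorm D y : ℝ) with hn
  have hn0 : 0 ≤ n := Nat.cast_nonneg _
  have hs : Real.sqrt n ^ 2 = n := Real.sq_sqrt hn0
  have hre2 : ((y.re : ℝ)) ^ 2 ≤ n := by
    have : (y.re ^ 2 : ℤ) ≤ (zNorm D y : ℤ) := by
      rw [zNorm_cast]; unfold Zsqrtd.norm; nlinarith [sq_nonneg y.im, (Nat.cast_nonneg D : (0:ℤ) ≤ D)]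
    calc ((y.re:ℝ))^2 = ((y.re^2 : ℤ) : ℝ) := by push_cast; ring
    _ ≤ ((zNorm D y : ℤ) : ℝ) := by exact_mod_cast this
    _ = n := by push_cast; rfl
  have hre : (y.re : ℝ) ≤ Real.sqrt n := by
    calc (y.re : ℝ) ≤ |(y.re : ℝ)| := le_abs_self _
    _ = Real.sqrt ((y.re:ℝ)^2) := (Real.sqrt_sq_eq_abs _).symm
    _ ≤ Real.sqrt n := Real.sqrt_le_sqrt hre2
  rw [hr]
  nlinarith [hs, hre]

lemma zNorm_one (D : ℕ) : zNorm D 1 = 1 := by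
  unfold zNorm; simp

lemma zNorm_pow (D l : ℕ) : zNorm D ((1 + Zsqrtd.sqrtd : ℤ√(-(D:ℤ))) ^ l) = (1 + D) ^ l := by
  induction l with
  | zero => simpa using zNorm_one D
  | succ n ih => rw [pow_succ, zNorm_mul, ih, zNorm_one_add_sqrtd, pow_succ]

lemma key (D M l : ℕ) (hD : 0 < D)
    (hM : ((1:ℝ)+D) ^ (((M:ℝ)-1)/2) ≤ ((1:ℝ)+D) ^ ((M:ℝ)/2) - 1)
    (hl : M < l)
    (p : ℤ√(-(D:ℤ))) (hp : p = ∑ k ∈ Finset.range l, (1 + Zsqrtd.sqrtd) ^ k) :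
    ((1:ℝ)+D) ^ (l - 1 : ℕ) ≤ (D : ℝ) * zNorm D p := by
  set a : ℝ := (1:ℝ) + D with ha
  have ha1 : (1:ℝ) < a := by
    have : (1:ℝ) ≤ D := by exact_mod_cast hD
    simp [ha]; linarith
  have ha0 : (0:ℝ) < a := by linarith
  -- p * sqrtd = (1+sqrtd)^l - 1
  have hps : p * Zsqrtd.sqrtd = (1 + Zsqrtd.sqrtd) ^ l - 1 := by
    rw [hp]
    have := geom_sum_mul (1 + Zsqrtd.sqrtd : ℤ√(-(D:ℤ))) l
    simpa using this
  -- norms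
  have hnorm : (D : ℝ) * zNorm D p = (zNorm D ((1 + Zsqrtd.sqrtd) ^ l - 1) : ℝ) := by
    rw [← hps, zNorm_mul, zNorm_sqrtd]
    push_cast; ring
  have hny : (zNorm D ((1 + Zsqrtd.sqrtd : ℤ√(-(D:ℤ))) ^ l) : ℝ) = a ^ l := by
    rw [zNorm_pow]; push_cast; ring
  -- sqrt of a^l
  have hsq : Real.sqrt (a ^ l) = a ^ ((l:ℝ)/2) := by
    rw [← Real.rpow_natCast a l, Real.sqrt_eq_rpow, ← Real.rpow_mul (le_of_lt ha0)]
    ring_nf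
  -- a^(l/2) - 1 ≥ a^((l-1)/2)
  have hstep : a ^ (((l:ℝ)-1)/2) ≤ a ^ ((l:ℝ)/2) - 1 := by
    set c : ℝ := a ^ (((l:ℝ)-(M:ℝ))/2) with hc
    have hc1 : (1:ℝ) ≤ c := by
      apply Real.one_le_rpow ha1.le
      have : (M:ℝ) ≤ l := by exact_mod_cast hl.le
      linarith
    have h1 : a ^ ((l:ℝ)/2) = c * a ^ ((M:ℝ)/2) := by
      rw [hc, ← Real.rpow_add ha0]; ring_nf
    have h2 : a ^ (((l:ℝ)-1)/2) = c * a ^ (((M:ℝ)-1)/2) := by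
      rw [hc, ← Real.rpow_add ha0]; ring_nf
    have h3 : c * a ^ (((M:ℝ)-1)/2) ≤ c * (a ^ ((M:ℝ)/2) - 1) :=
      mul_le_mul_of_nonneg_left hM (by linarith)
    have h4 : c * (a ^ ((M:ℝ)/2) - 1) ≤ c * a ^ ((M:ℝ)/2) - 1 := by nlinarith
    rw [h1, h2]; linarith
  have hb0 : (0:ℝ) ≤ a ^ (((l:ℝ)-1)/2) := (Real.rpow_pos_of_pos ha0 _).le
  have hfin : a ^ (((l:ℝ)-1)/2) * a ^ (((l:ℝ)-1)/2) = a ^ (l - 1 : ℕ) := by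
    rw [← Real.rpow_add ha0, ← Real.rpow_natCast a (l-1)]
    congr 1
    have : ((l - 1 : ℕ) : ℝ) = (l:ℝ) - 1 := by
      have : 1 ≤ l := by omega
      push_cast [this]; ring
    rw [this]; ring
  calc a ^ (l - 1 : ℕ) = a ^ (((l:ℝ)-1)/2) * a ^ (((l:ℝ)-1)/2) := hfin.symm
    _ ≤ (a ^ ((l:ℝ)/2) - 1) * (a ^ ((l:ℝ)/2) - 1) := by nlinarith
    _ = (Real.sqrt (zNorm D ((1 + Zsqrtd.sqrtd : ℤ√(-(D:ℤ))) ^ l)) - 1)^2 := by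
        rw [hny, hsq]; ring
    _ ≤ (zNorm D ((1 + Zsqrtd.sqrtd : ℤ√(-(D:ℤ))) ^ l - 1) : ℝ) := zNorm_sub_one D _
    _ = (D : ℝ) * zNorm D p := hnorm.symm


theorem mersenne_tail_product_bound_quadratic (D : ℕ) (hD : 0 < D)
    (hDsf : Squarefree D) (hD4 : D % 4 ≠ 3)
    (M : ℕ)
    (hM : ((1 : ℝ) + D) ^ (((M : ℝ) - 1) / 2) ≤ ((1 : ℝ) + D) ^ ((M : ℝ) / 2) - 1)
    (P : Set (ℤ√(-(D : ℤ))))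
    (hP : ∀ p ∈ P, Irreducible p ∧
      ∃ l : ℕ, p = ∑ k ∈ Finset.range l, (1 + Zsqrtd.sqrtd) ^ k) :
    zPprod D P ≤
      zPprod D {p ∈ P | ∃ l ≤ M, p = ∑ k ∈ Finset.range l, (1 + Zsqrtd.sqrtd) ^ k} ∧
    zPprod D {p ∈ P | ∃ l ≤ M, p = ∑ k ∈ Finset.range l, (1 + Zsqrtd.sqrtd) ^ k} *
        Real.exp (-(((1 : ℝ) + D) ^ ((1 : ℝ) - (M : ℝ)))) ≤ zPprod D P := by
  classical
  set a : ℝ := (1:ℝ) + D with ha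
  have ha1 : (1:ℝ) < a := by
    have : (1:ℝ) ≤ D := by exact_mod_cast hD
    simp only [ha]; linarith
  have ha0 : (0:ℝ) < a := by linarith
  set g : ℤ√(-(D:ℤ)) → ℝ := fun p => (zNorm D p : ℝ) / (1 + (zNorm D p : ℝ)) with hg
  have hg0 : ∀ p, 0 ≤ g p := fun p => by positivity
  set PM : Set (ℤ√(-(D:ℤ))) :=
    {p ∈ P | ∃ l ≤ M, p = ∑ k ∈ Finset.range l, (1 + Zsqrtd.sqrtd) ^ k} with hPM
  have hSdef : ∀ X : Set (ℤ√(-(D:ℤ))), zPprod D X =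
      sInf {x : ℝ | ∃ Q : Finset (ℤ√(-(D:ℤ))), ↑Q ⊆ X ∧ x = ∏ p ∈ Q, g p} := fun X => rfl
  set S : Set (ℤ√(-(D:ℤ))) → Set ℝ :=
    fun X => {x : ℝ | ∃ Q : Finset (ℤ√(-(D:ℤ))), ↑Q ⊆ X ∧ x = ∏ p ∈ Q, g p} with hS
  have hbdd : ∀ X, BddBelow (S X) := by
    intro X
    refine ⟨0, ?_⟩
    rintro x ⟨Q, -, rfl⟩
    exact Finset.prod_nonneg fun p _ => hg0 p
  have hne : ∀ X, (S X).Nonempty := fun X => ⟨1, ∅, by simp⟩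
  constructor
  · exact csInf_le_csInf (hbdd P) (hne PM)
      (by rintro x ⟨Q, hQ, rfl⟩; exact ⟨Q, fun p hp => (hQ hp).1, rfl⟩)
  · apply le_csInf (hne P)
    rintro x ⟨Q, hQ, rfl⟩
    set Q1 := Q.filter (· ∈ PM) with hQ1
    set Q2 := Q.filter (· ∉ PM) with hQ2
    have hsplit : ∏ p ∈ Q, g p = (∏ p ∈ Q1, g p) * ∏ p ∈ Q2, g p :=
      (Finset.prod_filter_mul_prod_filter_not Q (· ∈ PM) g).symm
    have h1 : zPprod D PM ≤ ∏ p ∈ Q1, g p := by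
      apply csInf_le (hbdd PM)
      exact ⟨Q1, fun p hp => (Finset.mem_filter.mp hp).2, rfl⟩
    -- choice of l
    set lp : ℤ√(-(D:ℤ)) → ℕ := fun p =>
      if h : ∃ l : ℕ, p = ∑ k ∈ Finset.range l, (1 + Zsqrtd.sqrtd) ^ k then h.choose else 0
      with hlp
    have hlpspec : ∀ p ∈ Q2, p = ∑ k ∈ Finset.range (lp p), (1 + Zsqrtd.sqrtd) ^ k ∧ M < lp p := by
      intro p hp
      have hpQ : p ∈ Q := (Finset.mem_filter.mp hp).1
      have hpP : p ∈ P := hQ hpQ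
      have hE : ∃ l : ℕ, p = ∑ k ∈ Finset.range l, (1 + Zsqrtd.sqrtd) ^ k := (hP p hpP).2
      have heq : p = ∑ k ∈ Finset.range (lp p), (1 + Zsqrtd.sqrtd) ^ k := by
        simp only [hlp, dif_pos hE]; exact hE.choose_spec
      refine ⟨heq, ?_⟩
      by_contra hle
      exact (Finset.mem_filter.mp hp).2 ⟨hpP, lp p, not_lt.mp hle, heq⟩
    set t : ℕ → ℝ := fun l => (D:ℝ) * a * (a⁻¹) ^ l with ht
    have ht0 : ∀ l, 0 ≤ t l := fun l => by positivity
    have hterm : ∀ p ∈ Q2, Real.exp (-(t (lp p))) ≤ g p := by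
      intro p hp
      obtain ⟨heq, hlgt⟩ := hlpspec p hp
      have hpP : p ∈ P := hQ (Finset.mem_filter.mp hp).1
      have hpne : p ≠ 0 := (hP p hpP).1.ne_zero
      have hN1 : 1 ≤ zNorm D p := zNorm_pos D hD p hpne
      set N : ℝ := (zNorm D p : ℝ) with hNdef
      have hN1' : (1:ℝ) ≤ N := by rw [hNdef]; exact_mod_cast hN1
      have hN0 : (0:ℝ) < N := by linarith
      have hkey : a ^ (lp p - 1 : ℕ) ≤ (D:ℝ) * N := key D M (lp p) hD hM hlgt p heq
      have hinv : 1 / N ≤ t (lp p) := by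
        have hl1 : 1 ≤ lp p := by omega
        have hpow : a ^ (lp p) = a ^ (lp p - 1 : ℕ) * a := by
          rw [← pow_succ]; congr 1; omega
        have hap : (0:ℝ) < a ^ (lp p - 1 : ℕ) := by positivity
        have hD0 : (0:ℝ) < D := by exact_mod_cast hD
        show 1 / N ≤ (D:ℝ) * a * (a⁻¹) ^ (lp p)
        have : (D:ℝ) * a * (a⁻¹) ^ (lp p) = (D:ℝ) * a / a ^ (lp p) := by
          rw [inv_pow]; ring
        rw [this, hpow]
        rw [div_le_div_iff₀ hN0 (by positivity)]
        nlinarith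
      have hexp : Real.exp (-(1/N)) ≤ g p := by
        have h1 : 1/N + 1 ≤ Real.exp (1/N) := Real.add_one_le_exp _
        have h3 : (Real.exp (1/N))⁻¹ ≤ (1/N + 1)⁻¹ :=
          inv_anti₀ (by positivity) h1
        have h4 : (1/N + 1)⁻¹ = N / (1 + N) := by
          rw [inv_eq_one_div, div_eq_div_iff (by positivity) (by positivity)]
          field_simp
        show Real.exp (-(1/N)) ≤ N / (1 + N)
        rw [Real.exp_neg, ← h4]
        exact h3
      calc Real.exp (-(t (lp p))) ≤ Real.exp (-(1/N)) := by
            apply Real.exp_le_exp.mpr; linarith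
        _ ≤ g p := hexp
    have hprod2 : Real.exp (-(∑ p ∈ Q2, t (lp p))) ≤ ∏ p ∈ Q2, g p := by
      have : Real.exp (-(∑ p ∈ Q2, t (lp p))) = ∏ p ∈ Q2, Real.exp (-(t (lp p))) := by
        rw [← Real.exp_sum]; congr 1; rw [← Finset.sum_neg_distrib]
      rw [this]
      exact Finset.prod_le_prod (fun p _ => (Real.exp_pos _).le) hterm
    -- sum bound
    have hsum : ∑ p ∈ Q2, t (lp p) ≤ a ^ ((1:ℝ) - (M:ℝ)) := by
      have hinj : ∀ p ∈ Q2, ∀ q ∈ Q2, lp p = lp q → p = q := by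
        intro p hp q hq hpq
        rw [(hlpspec p hp).1, (hlpspec q hq).1, hpq]
      rw [← Finset.sum_image hinj]
      set L := Q2.image lp with hL
      set K := L.sup id + 1 with hK
      have hLsub : L ⊆ Finset.Ico (M+1) K := by
        intro l hl
        obtain ⟨p, hp, rfl⟩ := Finset.mem_image.mp hl
        refine Finset.mem_Ico.mpr ⟨(hlpspec p hp).2, ?_⟩
        have : lp p ≤ L.sup id := Finset.le_sup (f := id) hl
        omega
      have hstep1 : ∑ l ∈ L, t l ≤ ∑ l ∈ Finset.Ico (M+1) K, t l :=
        Finset.sum_le_sum_of_subset_of_nonneg hLsub (fun l _ _ => ht0 l)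
      have hstep2 : ∑ l ∈ Finset.Ico (M+1) K, t l ≤ a ^ ((1:ℝ) - (M:ℝ)) := by
        by_cases hMK : M + 1 ≤ K
        · have hrne : (a⁻¹ : ℝ) ≠ 1 := by
            intro h; rw [inv_eq_one] at h; linarith
          have hgeo := geom_sum_Ico hrne hMK
          have : ∑ l ∈ Finset.Ico (M+1) K, t l
              = (D:ℝ) * a * (((a⁻¹)^K - (a⁻¹)^(M+1)) / (a⁻¹ - 1)) := by
            rw [ht]
            rw [← Finset.mul_sum, hgeo]
          rw [this]
          have hrK : (0:ℝ) < (a⁻¹)^K := by positivity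
          have hfinal : (D:ℝ) * a * (((a⁻¹)^K - (a⁻¹)^(M+1)) / (a⁻¹ - 1))
              ≤ (D:ℝ) * a * ((a⁻¹)^(M+1) / (1 - a⁻¹)) := by
            have h1r : (0:ℝ) < 1 - a⁻¹ := by
              have : a⁻¹ < 1 := by
                rw [inv_lt_one_iff₀]; right; exact ha1
              linarith
            have : ((a⁻¹)^K - (a⁻¹)^(M+1)) / (a⁻¹ - 1) = ((a⁻¹)^(M+1) - (a⁻¹)^K) / (1 - a⁻¹) := by
              rw [div_eq_div_iff (by linarith) (by linarith)]; ring
            rw [this]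
            apply mul_le_mul_of_nonneg_left _ (by positivity)
            gcongr
            linarith
          have h1r' : (1:ℝ) - a⁻¹ = (D:ℝ)/a := by
            rw [ha]; field_simp; ring
          have hrhs : a ^ ((1:ℝ) - (M:ℝ)) = a / a ^ M := by
            rw [Real.rpow_sub ha0, Real.rpow_one, Real.rpow_natCast]
          have hDne : (D:ℝ) ≠ 0 := by positivity
          calc (D:ℝ) * a * (((a⁻¹)^K - (a⁻¹)^(M+1)) / (a⁻¹ - 1))
              ≤ (D:ℝ) * a * ((a⁻¹)^(M+1) / (1 - a⁻¹)) := hfinal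
            _ = a / a ^ M := by
                rw [h1r', inv_pow]
                field_simp
                ring
            _ = a ^ ((1:ℝ) - (M:ℝ)) := hrhs.symm
        · have hempty : Finset.Ico (M+1) K = ∅ := Finset.Ico_eq_empty (by omega)
          rw [hempty, Finset.sum_empty]
          exact (Real.rpow_pos_of_pos ha0 _).le
      exact le_trans hstep1 hstep2
    calc zPprod D PM * Real.exp (-(a ^ ((1:ℝ) - (M:ℝ))))
        ≤ (∏ p ∈ Q1, g p) * ∏ p ∈ Q2, g p := by
          apply mul_le_mul h1 _ (Real.exp_pos _).le (Finset.prod_nonneg fun p _ => hg0 p)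
          calc Real.exp (-(a ^ ((1:ℝ) - (M:ℝ)))) ≤ Real.exp (-(∑ p ∈ Q2, t (lp p))) := by
                apply Real.exp_le_exp.mpr; linarith [hsum]
            _ ≤ ∏ p ∈ Q2, g p := hprod2
      _ = ∏ p ∈ Q, g p := hsplit.symm
end

section
/- Let q be a prime power and R = 𝔽_q[t]. The set of squarefree polynomials in R has density 1 − 1/q; that is, |S_R ∩ F_n| / |F_n| → 1 − 1/q as n → ∞. -/
open Polynomial Filter
open scoped Classical

/-! ### Auxiliary lemmas for counting squarefree polynomials -/

namespace PolySqfreeDensityAux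

set_option linter.unusedSectionVars false
set_option maxHeartbeats 1000000

section Lemmas

variable (F : Type*) [Field F] [Fintype F]

lemma degLE_eq (D : ℕ) : {f : F[X] | f.natDegree ≤ D} = ↑(degreeLT F (D+1)) := by
  ext f
  simp only [Set.mem_setOf_eq, SetLike.mem_coe, Polynomial.mem_degreeLT]
  rcases eq_or_ne f 0 with rfl | hf
  · simpa using bot_lt_iff_ne_bot.2 (by simp : ((D:WithBot ℕ)+1) ≠ ⊥)
  · rw [degree_eq_natDegree hf]
    exact_mod_cast Nat.lt_succ_iff.symm

lemma finite_degLE (D : ℕ) : {f : F[X] | f.natDegree ≤ D}.Finite := by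
  rw [degLE_eq]
  have : Finite (degreeLT F (D+1)) :=
    Finite.of_equiv _ (degreeLTEquiv F (D+1)).symm.toEquiv
  exact Set.toFinite _

lemma card_degLT (n : ℕ) : Nat.card (degreeLT F n) = Fintype.card F ^ n := by
  rw [Nat.card_congr (degreeLTEquiv F n).toEquiv, Nat.card_eq_fintype_card]
  simp [Fintype.card_fun]

lemma card_degLE (D : ℕ) :
    Nat.card {f : F[X] | f.natDegree ≤ D} = Fintype.card F ^ (D+1) := by
  rw [← card_degLT F (D+1)]
  exact Nat.card_congr (Equiv.setCongr (degLE_eq F D))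

noncomputable def monicEquiv (j : ℕ) :
    (degreeLT F j) ≃ {m : F[X] // m.Monic ∧ m.natDegree = j} where
  toFun g := ⟨X ^ j + g.1, by
    have hd : (g.1 : F[X]).degree < (X ^ j : F[X]).degree := by
      rw [degree_X_pow]; exact Polynomial.mem_degreeLT.1 g.2
    have hm : (X ^ j + g.1 : F[X]).Monic :=
      monic_X_pow_add (by rw [degree_X_pow] at hd; exact hd)
    refine ⟨hm, ?_⟩
    have h2 := degree_add_eq_left_of_degree_lt hd
    rw [degree_X_pow] at h2
    exact natDegree_eq_of_degree_eq_some h2⟩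
  invFun m := ⟨m.1 - X ^ j, by
    rw [Polynomial.mem_degreeLT]
    obtain ⟨m, hm, hdeg⟩ := m
    have h1 : m.degree = (X ^ j : F[X]).degree := by
      rw [degree_X_pow, degree_eq_natDegree hm.ne_zero, hdeg]
    have := degree_sub_lt h1 hm.ne_zero (by rw [hm.leadingCoeff, (monic_X_pow j).leadingCoeff])
    rwa [degree_eq_natDegree hm.ne_zero, hdeg] at this⟩
  left_inv g := by ext1; simp
  right_inv m := by ext1; simp

lemma card_monic (j : ℕ) :
    Nat.card {m : F[X] // m.Monic ∧ m.natDegree = j} = Fintype.card F ^ j := by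
  rw [← Nat.card_congr (monicEquiv F j)]
  rw [Nat.card_congr (degreeLTEquiv F j).toEquiv, Nat.card_eq_fintype_card]
  simp [Fintype.card_fun]

variable {F}

lemma squarefree_mul_unit {a u : F[X]} (hu : IsUnit u) (ha : Squarefree a) :
    Squarefree (a * u) := fun x hx => ha x (hx.trans (associated_mul_unit_left a u hu).dvd)

lemma sqfree_decomp_exists_aux :
    ∀ (n : ℕ) (f : F[X]), f ≠ 0 → f.natDegree = n →
      ∃ s m : F[X], Squarefree s ∧ m ≠ 0 ∧ s * m ^ 2 = f := by
  intro n
  induction n using Nat.strong_induction_on with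
  | _ n ih =>
    intro f hf hn
    by_cases hsq : Squarefree f
    · exact ⟨f, 1, hsq, one_ne_zero, by ring⟩
    · rw [Squarefree] at hsq
      push_neg at hsq
      obtain ⟨x, hxd, hxu⟩ := hsq
      have hx0 : x ≠ 0 := by rintro rfl; exact hf (zero_dvd_iff.mp (by simpa using hxd))
      obtain ⟨g, hg⟩ := hxd
      have hg0 : g ≠ 0 := by rintro rfl; simp at hg; exact hf hg
      have hxdeg : 1 ≤ x.natDegree := by
        by_contra h
        push_neg at h
        interval_cases hxn : x.natDegree
        · obtain ⟨c, rfl⟩ := Polynomial.natDegree_eq_zero.mp hxn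
          exact hxu (isUnit_C.mpr (IsUnit.mk0 c (by simpa using hx0)))
      have hdeg : g.natDegree < n := by
        have h2 : f.natDegree = x.natDegree + x.natDegree + g.natDegree := by
          rw [hg, natDegree_mul (mul_ne_zero hx0 hx0) hg0, natDegree_mul hx0 hx0]
        omega
      obtain ⟨s, m, hs, hm, hsm⟩ := ih g.natDegree hdeg g hg0 rfl
      exact ⟨s, x * m, hs, mul_ne_zero hx0 hm, by rw [← hsm] at hg; rw [hg]; ring⟩

lemma sqfree_decomp_exists_monic (f : F[X]) (hf : f ≠ 0) :
    ∃ s m : F[X], Squarefree s ∧ m.Monic ∧ s * m ^ 2 = f := by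
  obtain ⟨s, m, hs, hm, hsm⟩ := sqfree_decomp_exists_aux f.natDegree f hf rfl
  have hc : m.leadingCoeff ≠ 0 := leadingCoeff_ne_zero.mpr hm
  refine ⟨s * C (m.leadingCoeff ^ 2), m * C m.leadingCoeff⁻¹,
    squarefree_mul_unit (isUnit_C.mpr ((IsUnit.mk0 _ hc).pow 2)) hs,
    monic_mul_leadingCoeff_inv hm, ?_⟩
  rw [← hsm]
  have hone : (C (m.leadingCoeff ^ 2) : F[X]) * C m.leadingCoeff⁻¹ ^ 2 = 1 := by
    rw [← C_pow, ← C_mul, ← mul_pow, mul_inv_cancel₀ hc, one_pow, C_1]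
  calc s * C (m.leadingCoeff ^ 2) * (m * C m.leadingCoeff⁻¹) ^ 2
      = s * m ^ 2 * (C (m.leadingCoeff ^ 2) * C m.leadingCoeff⁻¹ ^ 2) := by ring
    _ = s * m ^ 2 := by rw [hone, mul_one]

lemma sqfree_decomp_unique {s₁ m₁ s₂ m₂ : F[X]} (hs₁ : Squarefree s₁) (hm₁ : m₁.Monic)
    (hs₂ : Squarefree s₂) (hm₂ : m₂.Monic) (h : s₁ * m₁ ^ 2 = s₂ * m₂ ^ 2) :
    s₁ = s₂ ∧ m₁ = m₂ := by
  classical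
  have hs₁0 := hs₁.ne_zero
  have hs₂0 := hs₂.ne_zero
  have hm₁0 := hm₁.ne_zero
  have hm₂0 := hm₂.ne_zero
  have hfac : ∀ (s m : F[X]), s ≠ 0 → m ≠ 0 →
      UniqueFactorizationMonoid.normalizedFactors (s * m ^ 2)
        = UniqueFactorizationMonoid.normalizedFactors s
          + 2 • UniqueFactorizationMonoid.normalizedFactors m := by
    intro s m hs hm
    rw [UniqueFactorizationMonoid.normalizedFactors_mul hs (pow_ne_zero 2 hm),
      UniqueFactorizationMonoid.normalizedFactors_pow]
  have hcount : ∀ a : F[X],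
      (UniqueFactorizationMonoid.normalizedFactors s₁).count a
        + 2 * (UniqueFactorizationMonoid.normalizedFactors m₁).count a
      = (UniqueFactorizationMonoid.normalizedFactors s₂).count a
        + 2 * (UniqueFactorizationMonoid.normalizedFactors m₂).count a := by
    intro a
    have e2 : UniqueFactorizationMonoid.normalizedFactors (s₁ * m₁ ^ 2)
        = UniqueFactorizationMonoid.normalizedFactors s₂
          + 2 • UniqueFactorizationMonoid.normalizedFactors m₂ := by
      rw [h]; exact hfac s₂ m₂ hs₂0 hm₂0
    have := congrArg (fun t => Multiset.count a t)
      ((hfac s₁ m₁ hs₁0 hm₁0).symm.trans e2)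
    simpa [Multiset.count_nsmul, two_mul, two_nsmul] using this
  have hnod₁ := (UniqueFactorizationMonoid.squarefree_iff_nodup_normalizedFactors hs₁0).mp hs₁
  have hnod₂ := (UniqueFactorizationMonoid.squarefree_iff_nodup_normalizedFactors hs₂0).mp hs₂
  have hseq : UniqueFactorizationMonoid.normalizedFactors s₁
      = UniqueFactorizationMonoid.normalizedFactors s₂ := by
    ext a
    have h1 := Multiset.nodup_iff_count_le_one.mp hnod₁ a
    have h2 := Multiset.nodup_iff_count_le_one.mp hnod₂ a
    have := hcount a
    omega
  have hmeq : UniqueFactorizationMonoid.normalizedFactors m₁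
      = UniqueFactorizationMonoid.normalizedFactors m₂ := by
    ext a
    have := hcount a
    rw [hseq] at this
    omega
  have hm12 : m₁ = m₂ := by
    refine Polynomial.eq_of_monic_of_associated hm₁ hm₂ ?_
    exact ((UniqueFactorizationMonoid.prod_normalizedFactors hm₁0).symm.trans
      (by rw [hmeq]; exact UniqueFactorizationMonoid.prod_normalizedFactors hm₂0))
  refine ⟨?_, hm12⟩
  rw [hm12] at h
  exact mul_right_cancel₀ (pow_ne_zero 2 hm₂0) h

variable (F)

noncomputable def decompEquiv (D : ℕ) :
    {p : F[X] × F[X] // Squarefree p.1 ∧ p.2.Monic ∧ p.1.natDegree + 2 * p.2.natDegree ≤ D}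
      ≃ {f : F[X] // f ≠ 0 ∧ f.natDegree ≤ D} := by
  refine Equiv.ofBijective (fun p => ⟨p.1.1 * p.1.2 ^ 2,
    mul_ne_zero p.2.1.ne_zero (pow_ne_zero 2 p.2.2.1.ne_zero), ?_⟩) ⟨?_, ?_⟩
  · have := p.2.2.2
    rw [natDegree_mul p.2.1.ne_zero (pow_ne_zero 2 p.2.2.1.ne_zero), natDegree_pow]
    omega
  · rintro ⟨⟨s₁, m₁⟩, hs₁, hm₁, h₁⟩ ⟨⟨s₂, m₂⟩, hs₂, hm₂, h₂⟩ h
    have h' : s₁ * m₁ ^ 2 = s₂ * m₂ ^ 2 := congrArg Subtype.val h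
    obtain ⟨e1, e2⟩ := sqfree_decomp_unique hs₁ hm₁ hs₂ hm₂ h'
    subst e1; subst e2; rfl
  · rintro ⟨f, hf0, hfD⟩
    obtain ⟨s, m, hs, hm, hsm⟩ := sqfree_decomp_exists_monic f hf0
    have hdeg : s.natDegree + 2 * m.natDegree ≤ D := by
      have h2 : f.natDegree = s.natDegree + 2 * m.natDegree := by
        rw [← hsm, natDegree_mul hs.ne_zero (pow_ne_zero 2 hm.ne_zero), natDegree_pow]
      omega
    exact ⟨⟨(s, m), hs, hm, hdeg⟩, Subtype.ext hsm⟩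

noncomputable def sigmaEquiv (D : ℕ) :
    {p : F[X] × F[X] // Squarefree p.1 ∧ p.2.Monic ∧ p.1.natDegree + 2 * p.2.natDegree ≤ D}
      ≃ Σ j : Fin (D / 2 + 1), {s : F[X] // Squarefree s ∧ s.natDegree ≤ D - 2 * j.1} ×
          {m : F[X] // m.Monic ∧ m.natDegree = j.1} where
  toFun p := ⟨⟨p.1.2.natDegree, by have := p.2.2.2; omega⟩,
    ⟨p.1.1, p.2.1, by simp only [Fin.val_mk]; have := p.2.2.2; omega⟩,
    ⟨p.1.2, p.2.2.1, rfl⟩⟩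
  invFun x := ⟨(x.2.1.1, x.2.2.1), x.2.1.2.1, x.2.2.2.1, by
    have h1 : (x.2.1.1 : F[X]).natDegree ≤ D - 2 * x.1.1 := x.2.1.2.2
    have h2 : (x.2.2.1 : F[X]).natDegree = x.1.1 := x.2.2.2.2
    have h3 : x.1.1 < D / 2 + 1 := x.1.2
    dsimp only
    omega⟩
  left_inv p := rfl
  right_inv := fun x => by
    obtain ⟨⟨j, hj⟩, ⟨s, hs⟩, ⟨m, hm⟩⟩ := x
    have h2 : m.natDegree = j := hm.2
    subst h2
    rfl

lemma natCard_sigma {ι : Type*} [Fintype ι] (β : ι → Type*) [∀ i, Finite (β i)] :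
    Nat.card (Σ i, β i) = ∑ i, Nat.card (β i) := by
  letI : ∀ i, Fintype (β i) := fun i => Fintype.ofFinite _
  simp [Nat.card_eq_fintype_card]

lemma finite_sqfree_le (k : ℕ) : Finite {s : F[X] // Squarefree s ∧ s.natDegree ≤ k} :=
  Set.Finite.to_subtype ((finite_degLE F k).subset fun _ hs => hs.2)

lemma finite_monic_eq (j : ℕ) : Finite {m : F[X] // m.Monic ∧ m.natDegree = j} :=
  Set.Finite.to_subtype ((finite_degLE F j).subset fun _ hm => le_of_eq hm.2)

lemma card_identity (D : ℕ) :
    Nat.card {f : F[X] // f ≠ 0 ∧ f.natDegree ≤ D}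
      = ∑ j ∈ Finset.range (D / 2 + 1),
          Nat.card {s : F[X] // Squarefree s ∧ s.natDegree ≤ D - 2 * j}
            * Fintype.card F ^ j := by
  haveI := finite_sqfree_le F
  haveI := finite_monic_eq F
  rw [← Nat.card_congr (decompEquiv F D), Nat.card_congr (sigmaEquiv F D), natCard_sigma]
  rw [← Fin.sum_univ_eq_sum_range (fun j => Nat.card
    {s : F[X] // Squarefree s ∧ s.natDegree ≤ D - 2 * j} * Fintype.card F ^ j)]
  exact Finset.sum_congr rfl fun j _ => by rw [Nat.card_prod, card_monic]

lemma card_nonzero (D : ℕ) :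
    Nat.card {f : F[X] // f ≠ 0 ∧ f.natDegree ≤ D} + 1 = Fintype.card F ^ (D+1) := by
  have h1 : Nat.card {f : F[X] // f ≠ 0 ∧ f.natDegree ≤ D}
      = ({f : F[X] | f.natDegree ≤ D} \ {0}).ncard := by
    rw [← Nat.card_coe_set_eq]
    exact Nat.card_congr (Equiv.subtypeEquivRight (fun f => by
      simp [Set.mem_diff, and_comm]))
  rw [h1, Set.ncard_diff_singleton_add_one (by simp) (finite_degLE F D),
    ← Nat.card_coe_set_eq, card_degLE]

lemma card_sqfree (D : ℕ) (hD : 2 ≤ D) :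
    Nat.card {s : F[X] // Squarefree s ∧ s.natDegree ≤ D} + Fintype.card F ^ D + 1
      = Fintype.card F ^ (D+1) + Fintype.card F := by
  set q := Fintype.card F with hq
  have h1 := card_identity F D
  have h2 := card_identity F (D-2)
  have hnz1 := card_nonzero F D
  have hnz2 := card_nonzero F (D-2)
  rw [(by omega : D - 2 + 1 = D - 1)] at hnz2
  have hsplit : ∑ j ∈ Finset.range (D / 2 + 1),
      Nat.card {s : F[X] // Squarefree s ∧ s.natDegree ≤ D - 2 * j} * q ^ j
      = Nat.card {s : F[X] // Squarefree s ∧ s.natDegree ≤ D}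
        + q * ∑ j ∈ Finset.range ((D-2) / 2 + 1),
            Nat.card {s : F[X] // Squarefree s ∧ s.natDegree ≤ (D-2) - 2 * j} * q ^ j := by
    rw [Finset.sum_range_succ' (fun j =>
      Nat.card {s : F[X] // Squarefree s ∧ s.natDegree ≤ D - 2 * j} * q ^ j)]
    rw [(by omega : D / 2 = (D-2)/2 + 1)]
    simp only [mul_zero, Nat.sub_zero, pow_zero, mul_one]
    rw [add_comm, Finset.mul_sum]
    congr 1
    refine Finset.sum_congr rfl fun i _ => ?_
    rw [(by omega : D - 2 * (i+1) = (D-2) - 2*i), pow_succ]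
    ring
  rw [hsplit] at h1
  set B := Nat.card {s : F[X] // Squarefree s ∧ s.natDegree ≤ D} with hB
  set S2 := ∑ j ∈ Finset.range ((D-2) / 2 + 1),
      Nat.card {s : F[X] // Squarefree s ∧ s.natDegree ≤ (D-2) - 2 * j} * q ^ j with hS2def
  have hS2 : S2 + 1 = q ^ (D-1) := by rw [← h2]; exact hnz2
  have hpow : q ^ (D-1) * q = q ^ D := by rw [← pow_succ]; congr 1; omega
  have e1 : q * (S2 + 1) = q ^ D := by rw [hS2, ← hpow]; ring
  have e2 : q * S2 + q = q ^ D := by rw [← e1]; ring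
  have e3 : B + q * S2 + 1 = q ^ (D+1) := by
    rw [h1] at hnz1
    exact hnz1
  linarith [e2, e3]

variable {F}

lemma polyIsSqfree_iff (r : F[X]) : polyIsSqfree F r ↔ Squarefree r ∧ ¬ IsUnit r := by
  constructor
  · rintro ⟨h0, hu, hb⟩
    refine ⟨fun x hx => ?_, hu⟩
    by_contra hxu
    have hx0 : x ≠ 0 := by rintro rfl; exact h0 (zero_dvd_iff.mp (by simpa using hx))
    obtain ⟨i, hi, hid⟩ := WfDvdMonoid.exists_irreducible_factor hxu hx0
    exact hb i hi ((pow_dvd_pow_of_dvd hid 2).trans (by rwa [← sq] at hx))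
  · rintro ⟨hs, hu⟩
    exact ⟨hs.ne_zero, hu, fun b hb hbd =>
      hb.not_isUnit (hs b (by rwa [← sq]))⟩

variable (F)

lemma units_eq_image :
    {u : F[X] | IsUnit u} = (fun c : F => C c) '' {c : F | c ≠ 0} := by
  ext p
  simp only [Set.mem_setOf_eq, Set.mem_image]
  constructor
  · intro hp
    obtain ⟨r, hr, rfl⟩ := Polynomial.isUnit_iff.mp hp
    exact ⟨r, hr.ne_zero, rfl⟩
  · rintro ⟨c, hc, rfl⟩
    exact isUnit_C.mpr (isUnit_iff_ne_zero.mpr hc)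

lemma card_units : Nat.card {u : F[X] // IsUnit u} + 1 = Fintype.card F := by
  have h1 : Nat.card {u : F[X] // IsUnit u} = ({u : F[X] | IsUnit u}).ncard := by
    rw [← Nat.card_coe_set_eq]; rfl
  rw [h1, units_eq_image, Set.ncard_image_of_injective _ C_injective]
  have : {c : F | c ≠ 0} = Set.univ \ {0} := by ext c; simp
  rw [this, ← Nat.card_coe_set_eq]
  have h2 := Set.ncard_diff_singleton_add_one (Set.mem_univ (0:F)) Set.finite_univ
  rw [Nat.card_coe_set_eq, h2, Set.ncard_univ, Nat.card_eq_fintype_card]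

lemma sqfree_split (D : ℕ) :
    {s : F[X] | Squarefree s ∧ s.natDegree ≤ D}
      = {s : F[X] | polyIsSqfree F s ∧ s.natDegree ≤ D} ∪ {u : F[X] | IsUnit u} := by
  ext s
  simp only [Set.mem_setOf_eq, Set.mem_union, polyIsSqfree_iff]
  constructor
  · rintro ⟨hs, hd⟩
    by_cases hu : IsUnit s
    · exact Or.inr hu
    · exact Or.inl ⟨⟨hs, hu⟩, hd⟩
  · rintro (⟨⟨hs, hu⟩, hd⟩ | hu)
    · exact ⟨hs, hd⟩
    · exact ⟨hu.squarefree, le_trans (le_of_eq (natDegree_eq_zero_of_isUnit hu)) (Nat.zero_le D)⟩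

lemma card_polyIsSqfree (D : ℕ) (hD : 2 ≤ D) :
    Nat.card {s : F[X] // polyIsSqfree F s ∧ s.natDegree ≤ D} + Fintype.card F ^ D
      = Fintype.card F ^ (D+1) := by
  have hfin1 : {s : F[X] | polyIsSqfree F s ∧ s.natDegree ≤ D}.Finite :=
    (finite_degLE F D).subset fun s hs => hs.2
  have hfin2 : {u : F[X] | IsUnit u}.Finite :=
    (finite_degLE F 0).subset fun u hu => le_of_eq (natDegree_eq_zero_of_isUnit hu)
  have hdisj : Disjoint {s : F[X] | polyIsSqfree F s ∧ s.natDegree ≤ D} {u : F[X] | IsUnit u} := by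
    rw [Set.disjoint_left]
    rintro s ⟨hs, _⟩ hu
    exact ((polyIsSqfree_iff s).mp hs).2 hu
  have hsum : Nat.card {s : F[X] // Squarefree s ∧ s.natDegree ≤ D}
      = Nat.card {s : F[X] // polyIsSqfree F s ∧ s.natDegree ≤ D}
        + Nat.card {u : F[X] // IsUnit u} := by
    have h3 : ({s : F[X] | Squarefree s ∧ s.natDegree ≤ D}).ncard
        = ({s : F[X] | polyIsSqfree F s ∧ s.natDegree ≤ D}).ncard
          + ({u : F[X] | IsUnit u}).ncard := by
      rw [sqfree_split F D]; exact Set.ncard_union_eq hdisj hfin1 hfin2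
    simp only [← Nat.card_coe_set_eq] at h3; exact h3
  have h1 := card_sqfree F D hD
  have h2 := card_units F
  rw [hsum] at h1
  omega

end Lemmas

end PolySqfreeDensityAux

open PolySqfreeDensityAux in
theorem density_squarefree_polynomials (F : Type*) [Field F] [Fintype F] :
    polyHasDensity F {s | polyIsSqfree F s} (1 - 1 / (Fintype.card F : ℝ)) := by
  set q := Fintype.card F with hqdef
  have hq : 1 < q := Fintype.one_lt_card
  refine Tendsto.congr' ?_ tendsto_const_nhds
  filter_upwards [eventually_ge_atTop (q^2 + 1)] with n hn
  have hn1 : n - 1 ≠ 0 := by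
    have : 1 < q ^ 2 := Nat.one_lt_pow (by omega) hq
    omega
  set d := Nat.log q (n-1) with hd
  have hd2 : 2 ≤ d := (Nat.le_log_iff_pow_le hq hn1).mpr (by omega)
  have hlow : q ^ d ≤ n - 1 := Nat.pow_log_le_self q hn1
  have hFn : polyFn F n = {x : F[X] | x.natDegree ≤ d} := by
    ext x
    simp only [polyFn, polyNorm, Set.mem_setOf_eq, ← hqdef]
    split_ifs with h
    · simp only [h, natDegree_zero]
      constructor
      · intro _; omega
      · intro _; omega
    · constructor
      · intro hlt
        exact (Nat.le_log_iff_pow_le hq hn1).mpr (by omega)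
      · intro hle
        have h1 : q ^ x.natDegree ≤ q ^ d := Nat.pow_le_pow_right (by omega) hle
        omega
  have hInt : {s | polyIsSqfree F s} ∩ polyFn F n
      = {s : F[X] | polyIsSqfree F s ∧ s.natDegree ≤ d} := by
    rw [hFn]; ext s; simp [Set.mem_inter_iff]
  have hnum : ({s : F[X] | polyIsSqfree F s ∧ s.natDegree ≤ d}).ncard
      = Nat.card {s : F[X] // polyIsSqfree F s ∧ s.natDegree ≤ d} := by
    rw [← Nat.card_coe_set_eq]; rfl
  have hden : (polyFn F n).ncard = q ^ (d+1) := by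
    rw [hFn, ← Nat.card_coe_set_eq, card_degLE]
  have hcount := card_polyIsSqfree F d hd2
  show (1 : ℝ) - 1 / q = _
  rw [hInt, hnum, hden]
  have hA : (Nat.card {s : F[X] // polyIsSqfree F s ∧ s.natDegree ≤ d} : ℝ) + (q:ℝ)^d
      = (q:ℝ)^(d+1) := by exact_mod_cast hcount
  have hq0 : (q : ℝ) ≠ 0 := by positivity
  have hqd : (q : ℝ)^(d+1) ≠ 0 := by positivity
  push_cast
  rw [eq_div_iff hqd, sub_mul, one_mul, pow_succ]
  field_simp
  rw [pow_succ] at hA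
  linarith [hA]
end

section
/- Let D be a positive integer and R = ℤ[√−D], with N(a + b√−D) = a² + D b² and F_n = {x ∈ R : N(x) < n}. Then for every positive integer k, the ratio |F_{k·n}| / |F_n| → k as n → ∞. -/
open Filter

open MeasureTheory Set Pointwise

namespace CardFnAux

/-- Half-open unit square centered at `p`. -/
def sq2 (p : ℝ × ℝ) : Set (ℝ × ℝ) :=
  Set.Ico (p.1 - 2⁻¹) (p.1 + 2⁻¹) ×ˢ Set.Ico (p.2 - 2⁻¹) (p.2 + 2⁻¹)

/-- Open ellipse-disc `{x² + D y² < t}`. -/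
def ell (D : ℕ) (t : ℝ) : Set (ℝ × ℝ) := {p | p.1 ^ 2 + (D : ℝ) * p.2 ^ 2 < t}

lemma meas_sq2 (p : ℝ × ℝ) : MeasurableSet (sq2 p) :=
  measurableSet_Ico.prod measurableSet_Ico

lemma vol_sq2 (p : ℝ × ℝ) : volume (sq2 p) = 1 := by
  rw [sq2, Measure.volume_eq_prod, Measure.prod_prod, Real.volume_Ico, Real.volume_Ico]
  norm_num

lemma int_eq_of_close {a a' : ℤ} (h : |(a : ℝ) - (a' : ℝ)| < 1) : a = a' := by
  have h2 : |((a - a' : ℤ) : ℝ)| < 1 := by push_cast; exact h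
  rw [← Int.cast_abs] at h2
  have h3 : |a - a'| < 1 := by exact_mod_cast h2
  rw [abs_lt] at h3
  omega

lemma sq2_disjoint {a b a' b' : ℤ} (h : ¬(a = a' ∧ b = b')) :
    Disjoint (sq2 ((a : ℝ), (b : ℝ))) (sq2 ((a' : ℝ), (b' : ℝ))) := by
  rw [Set.disjoint_left]
  rintro ⟨x, y⟩ ⟨h1, h2⟩ ⟨h1', h2'⟩
  simp only [Set.mem_Ico] at h1 h2 h1' h2'
  refine h ⟨int_eq_of_close ?_, int_eq_of_close ?_⟩
  · rw [abs_sub_lt_iff]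
    constructor <;> linarith [h1.1, h1.2, h1'.1, h1'.2]
  · rw [abs_sub_lt_iff]
    constructor <;> linarith [h2.1, h2.2, h2'.1, h2'.2]

lemma ell_empty (D : ℕ) {t : ℝ} (ht : t ≤ 0) : ell D t = ∅ := by
  ext p
  simp only [ell, Set.mem_setOf_eq, Set.mem_empty_iff_false, iff_false, not_lt]
  have : (0 : ℝ) ≤ p.1 ^ 2 + (D : ℝ) * p.2 ^ 2 := by positivity
  linarith

lemma ell_smul (D : ℕ) {t : ℝ} (ht : 0 < t) : ell D t = Real.sqrt t • ell D 1 := by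
  have hs : Real.sqrt t ≠ 0 := ne_of_gt (Real.sqrt_pos.2 ht)
  have h2 : Real.sqrt t ^ 2 = t := Real.sq_sqrt ht.le
  ext p
  rw [Set.mem_smul_set_iff_inv_smul_mem₀ hs]
  simp only [ell, Set.mem_setOf_eq, Prod.smul_fst, Prod.smul_snd, smul_eq_mul]
  rw [mul_pow, mul_pow, inv_pow, h2]
  rw [show t⁻¹ * p.1 ^ 2 + (D : ℝ) * (t⁻¹ * p.2 ^ 2) = (p.1 ^ 2 + (D : ℝ) * p.2 ^ 2) / t by ring,
    div_lt_one ht]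

lemma vol_ell (D : ℕ) (t : ℝ) :
    volume (ell D t) = ENNReal.ofReal t * volume (ell D 1) := by
  rcases le_or_gt t 0 with ht | ht
  · rw [ell_empty D ht, ENNReal.ofReal_eq_zero.2 ht, zero_mul, measure_empty]
  · rw [ell_smul D ht, Measure.addHaar_smul]
    congr 1
    have h2 : Module.finrank ℝ (ℝ × ℝ) = 2 := by simp
    rw [h2, Real.sq_sqrt ht.le, abs_of_pos ht]

lemma vol_ell_pos (D : ℕ) : 0 < volume (ell D 1) := by
  have hopen : IsOpen (ell D 1) := by
    have h : ell D 1 = (fun p : ℝ × ℝ => p.1 ^ 2 + (D : ℝ) * p.2 ^ 2) ⁻¹' Set.Iio 1 := rfl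
    rw [h]
    exact IsOpen.preimage (by fun_prop) isOpen_Iio
  exact hopen.measure_pos volume ⟨(0, 0), by simp [ell]⟩

lemma vol_ell_lt_top (D : ℕ) (hD : 0 < D) : volume (ell D 1) < ⊤ := by
  have hD1 : (1 : ℝ) ≤ (D : ℝ) := by exact_mod_cast hD
  have hsub : ell D 1 ⊆ Set.Icc (-1 : ℝ) 1 ×ˢ Set.Icc (-1 : ℝ) 1 := by
    rintro ⟨x, y⟩ hp
    simp only [ell, Set.mem_setOf_eq] at hp
    constructor <;> constructor <;> nlinarith [sq_nonneg x, sq_nonneg y]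
  calc volume (ell D 1) ≤ volume (Set.Icc (-1 : ℝ) 1 ×ˢ Set.Icc (-1 : ℝ) 1) :=
        measure_mono hsub
    _ < ⊤ := by
        rw [Measure.volume_eq_prod, Measure.prod_prod, Real.volume_Icc]
        exact ENNReal.mul_lt_top ENNReal.ofReal_lt_top ENNReal.ofReal_lt_top

lemma mem_zFn_iff (D n : ℕ) (x : ℤ√(-(D : ℤ))) :
    x ∈ zFn D n ↔ x.re ^ 2 + (D : ℤ) * x.im ^ 2 < (n : ℤ) := by
  have h1 : (0 : ℤ) ≤ x.re ^ 2 := sq_nonneg _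
  have h2 : (0 : ℤ) ≤ (D : ℤ) * x.im ^ 2 := by positivity
  simp only [zFn, Set.mem_setOf_eq, zNorm]
  omega

lemma zFn_finite (D n : ℕ) (hD : 0 < D) : (zFn D n).Finite := by
  have hD1 : (1 : ℤ) ≤ (D : ℤ) := by exact_mod_cast hD
  have hsub : zFn D n ⊆ (fun x : ℤ√(-(D : ℤ)) => (x.re, x.im)) ⁻¹'
      (Set.Icc (-(n : ℤ)) n ×ˢ Set.Icc (-(n : ℤ)) n) := by
    intro x hx
    rw [mem_zFn_iff] at hx
    have h1 : (0 : ℤ) ≤ x.re ^ 2 := sq_nonneg _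
    have h3 : (0 : ℤ) ≤ x.im ^ 2 := sq_nonneg _
    have h2 : x.im ^ 2 ≤ (D : ℤ) * x.im ^ 2 := le_mul_of_one_le_left h3 hD1
    have hre : x.re ^ 2 < (n : ℤ) := by nlinarith
    have him : x.im ^ 2 < (n : ℤ) := by nlinarith
    constructor <;> constructor <;> nlinarith
  refine Set.Finite.subset (Set.Finite.preimage ?_ ?_) hsub
  · intro x _ y _ hxy
    exact Zsqrtd.ext (congrArg Prod.fst hxy) (congrArg Prod.snd hxy)
  · exact (Set.finite_Icc _ _).prod (Set.finite_Icc _ _)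

/-- Square of a shifted point: if `|u - a| ≤ 1/2` then `u² ≤ a² + |a| + 1/4`. -/
lemma sq_shift {u a : ℝ} (h1 : a - 2⁻¹ ≤ u) (h2 : u ≤ a + 2⁻¹) :
    u ^ 2 ≤ a ^ 2 + |a| + 4⁻¹ := by
  have hs : (u - a) ^ 2 ≤ 4⁻¹ := by nlinarith
  have hm : a * (u - a) ≤ |a| * 2⁻¹ := by
    calc a * (u - a) ≤ |a * (u - a)| := le_abs_self _
      _ = |a| * |u - a| := abs_mul _ _
      _ ≤ |a| * 2⁻¹ := by
          apply mul_le_mul_of_nonneg_left _ (abs_nonneg a)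
          rw [abs_le]; constructor <;> linarith
  nlinarith [hs, hm]

/-- Upper inclusion: the square around a lattice point of `F_n` lies in the
slightly larger ellipse. -/
lemma sq2_subset_ell (D : ℕ) (hD : 0 < D) {n : ℕ} (hn : 1 ≤ n)
    {x : ℤ√(-(D : ℤ))} (hx : x ∈ zFn D n) :
    sq2 ((x.re : ℝ), (x.im : ℝ)) ⊆ ell D ((n : ℝ) + (1 + 2 * D) * Real.sqrt n) := by
  rintro ⟨u, v⟩ ⟨h1, h2⟩
  simp only [Set.mem_Ico] at h1 h2
  rw [mem_zFn_iff] at hx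
  have hab : (x.re : ℝ) ^ 2 + (D : ℝ) * (x.im : ℝ) ^ 2 < n := by exact_mod_cast hx
  set a : ℝ := (x.re : ℝ) with ha'
  set b : ℝ := (x.im : ℝ) with hb'
  have hD1 : (1 : ℝ) ≤ (D : ℝ) := by exact_mod_cast hD
  have hD0 : (0 : ℝ) ≤ (D : ℝ) := by positivity
  have hsn1 : (1 : ℝ) ≤ Real.sqrt n := by
    rw [show (1 : ℝ) = Real.sqrt 1 by simp]
    exact Real.sqrt_le_sqrt (by exact_mod_cast hn)
  have hsq : Real.sqrt (n : ℝ) ^ 2 = (n : ℝ) := Real.sq_sqrt (by positivity)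
  have hDbnn : (0 : ℝ) ≤ (D : ℝ) * b ^ 2 := by positivity
  have hb2D : b ^ 2 ≤ (D : ℝ) * b ^ 2 := le_mul_of_one_le_left (sq_nonneg b) hD1
  have ha : |a| ≤ Real.sqrt n := Real.abs_le_sqrt (by linarith)
  have hb : |b| ≤ Real.sqrt n := Real.abs_le_sqrt (by linarith [sq_nonneg a])
  have hu : u ^ 2 ≤ a ^ 2 + |a| + 4⁻¹ := sq_shift h1.1 (by linarith [h1.2])
  have hv : v ^ 2 ≤ b ^ 2 + |b| + 4⁻¹ := sq_shift h2.1 (by linarith [h2.2])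
  have hDv : (D : ℝ) * v ^ 2 ≤ (D : ℝ) * (b ^ 2 + |b| + 4⁻¹) :=
    mul_le_mul_of_nonneg_left hv hD0
  have hDb : (D : ℝ) * |b| ≤ (D : ℝ) * Real.sqrt n := mul_le_mul_of_nonneg_left hb hD0
  have hDsn : (D : ℝ) ≤ (D : ℝ) * Real.sqrt n := by
    calc (D : ℝ) = (D : ℝ) * 1 := (mul_one _).symm
      _ ≤ (D : ℝ) * Real.sqrt n := mul_le_mul_of_nonneg_left hsn1 hD0
  have hDv' : (D : ℝ) * v ^ 2 ≤ (D : ℝ) * b ^ 2 + (D : ℝ) * |b| + (D : ℝ) * 4⁻¹ :=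
    hDv.trans_eq (by ring)
  show u ^ 2 + (D : ℝ) * v ^ 2 < (n : ℝ) + (1 + 2 * D) * Real.sqrt n
  linarith [hu, hDv', hab, ha, hDb, hDsn, hsn1, hD1]

/-- Lower inclusion: the smaller ellipse is covered by squares of `F_n`. -/
lemma ell_subset_union (D : ℕ) (hD : 0 < D) {n : ℕ} (hn : 1 ≤ n) :
    ell D ((n : ℝ) - (1 + 2 * D) * Real.sqrt n) ⊆
      ⋃ x ∈ (zFn_finite D n hD).toFinset, sq2 ((x.re : ℝ), (x.im : ℝ)) := by
  rintro ⟨u, v⟩ hp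
  simp only [ell, Set.mem_setOf_eq] at hp
  have hD1 : (1 : ℝ) ≤ (D : ℝ) := by exact_mod_cast hD
  have hD0 : (0 : ℝ) ≤ (D : ℝ) := by positivity
  have hsn1 : (1 : ℝ) ≤ Real.sqrt n := by
    rw [show (1 : ℝ) = Real.sqrt 1 by simp]
    exact Real.sqrt_le_sqrt (by exact_mod_cast hn)
  have hsq : Real.sqrt (n : ℝ) ^ 2 = (n : ℝ) := Real.sq_sqrt (by positivity)
  have hfl1 := Int.floor_le (u + 2⁻¹)
  have hfl2 := Int.lt_floor_add_one (u + 2⁻¹)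
  have hfl3 := Int.floor_le (v + 2⁻¹)
  have hfl4 := Int.lt_floor_add_one (v + 2⁻¹)
  set a : ℤ := ⌊u + 2⁻¹⌋ with haz
  set b : ℤ := ⌊v + 2⁻¹⌋ with hbz
  have hau : (a : ℝ) - 2⁻¹ ≤ u ∧ u < (a : ℝ) + 2⁻¹ := ⟨by linarith, by linarith⟩
  have hbv : (b : ℝ) - 2⁻¹ ≤ v ∧ v < (b : ℝ) + 2⁻¹ := ⟨by linarith, by linarith⟩
  have hcs : (0 : ℝ) ≤ (1 + 2 * D) * Real.sqrt n := by positivity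
  have hDvnn : (0 : ℝ) ≤ (D : ℝ) * v ^ 2 := by positivity
  have hv2D : v ^ 2 ≤ (D : ℝ) * v ^ 2 := le_mul_of_one_le_left (sq_nonneg v) hD1
  have hu2 : u ^ 2 ≤ (n : ℝ) := by linarith [sq_nonneg u]
  have hv2 : v ^ 2 ≤ (n : ℝ) := by linarith [sq_nonneg u]
  have hua : |u| ≤ Real.sqrt n := Real.abs_le_sqrt hu2
  have hvb : |v| ≤ Real.sqrt n := Real.abs_le_sqrt hv2
  have ha2 : (a : ℝ) ^ 2 ≤ u ^ 2 + |u| + 4⁻¹ := by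
    have := sq_shift (a := u) (u := (a : ℝ)) (by linarith [hau.2]) (by linarith [hau.1])
    linarith [this]
  have hb2 : (b : ℝ) ^ 2 ≤ v ^ 2 + |v| + 4⁻¹ := by
    have := sq_shift (a := v) (u := (b : ℝ)) (by linarith [hbv.2]) (by linarith [hbv.1])
    linarith [this]
  have hDb2 : (D : ℝ) * (b : ℝ) ^ 2 ≤ (D : ℝ) * (v ^ 2 + |v| + 4⁻¹) :=
    mul_le_mul_of_nonneg_left hb2 hD0
  have hDv : (D : ℝ) * |v| ≤ (D : ℝ) * Real.sqrt n := mul_le_mul_of_nonneg_left hvb hD0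
  have hDsn : (D : ℝ) ≤ (D : ℝ) * Real.sqrt n := by
    calc (D : ℝ) = (D : ℝ) * 1 := (mul_one _).symm
      _ ≤ (D : ℝ) * Real.sqrt n := mul_le_mul_of_nonneg_left hsn1 hD0
  have hDb2' : (D : ℝ) * (b : ℝ) ^ 2 ≤ (D : ℝ) * v ^ 2 + (D : ℝ) * |v| + (D : ℝ) * 4⁻¹ :=
    hDb2.trans_eq (by ring)
  have hmem : (⟨a, b⟩ : ℤ√(-(D : ℤ))) ∈ zFn D n := by
    rw [mem_zFn_iff]
    have hreal : (a : ℝ) ^ 2 + (D : ℝ) * (b : ℝ) ^ 2 < (n : ℝ) := by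
      linarith [ha2, hDb2', hp, hua, hDv, hDsn, hsn1, hD1]
    exact_mod_cast hreal
  refine Set.mem_biUnion ((zFn_finite D n hD).mem_toFinset.2 hmem) ?_
  exact ⟨⟨hau.1, hau.2⟩, ⟨hbv.1, hbv.2⟩⟩

/-- Volume of the union of squares equals the cardinality. -/
lemma vol_union (D n : ℕ) (hD : 0 < D) :
    volume (⋃ x ∈ (zFn_finite D n hD).toFinset, sq2 ((x.re : ℝ), (x.im : ℝ)))
      = ((zFn D n).ncard : ENNReal) := by
  rw [measure_biUnion_finset ?_ (fun x _ => meas_sq2 _)]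
  · simp only [vol_sq2, Finset.sum_const, nsmul_eq_mul, mul_one]
    rw [Set.ncard_eq_toFinset_card (zFn D n) (zFn_finite D n hD)]
  · intro x hx y hy hxy
    apply sq2_disjoint
    rintro ⟨h1, h2⟩
    exact hxy (Zsqrtd.ext h1 h2)

/-- Two-sided bound on the counting function, in the reals. -/
lemma card_bounds (D : ℕ) (hD : 0 < D) {n : ℕ} (hn : 1 ≤ n) :
    ((n : ℝ) - (1 + 2 * D) * Real.sqrt n) * (volume (ell D 1)).toReal
        ≤ ((zFn D n).ncard : ℝ) ∧
      ((zFn D n).ncard : ℝ)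
        ≤ ((n : ℝ) + (1 + 2 * D) * Real.sqrt n) * (volume (ell D 1)).toReal := by
  have hVtop : volume (ell D 1) ≠ ⊤ := (vol_ell_lt_top D hD).ne
  have hVnn : (0 : ℝ) ≤ (volume (ell D 1)).toReal := ENNReal.toReal_nonneg
  have hUvol := vol_union D n hD
  have hupper : ((zFn D n).ncard : ENNReal)
      ≤ ENNReal.ofReal ((n : ℝ) + (1 + 2 * D) * Real.sqrt n) * volume (ell D 1) := by
    rw [← hUvol, ← vol_ell D]
    apply measure_mono
    apply Set.iUnion₂_subset
    intro x hx
    exact sq2_subset_ell D hD hn ((zFn_finite D n hD).mem_toFinset.1 hx)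
  have hlower : ENNReal.ofReal ((n : ℝ) - (1 + 2 * D) * Real.sqrt n) * volume (ell D 1)
      ≤ ((zFn D n).ncard : ENNReal) := by
    rw [← hUvol, ← vol_ell D]
    exact measure_mono (ell_subset_union D hD hn)
  constructor
  · rcases le_or_gt ((n : ℝ) - (1 + 2 * D) * Real.sqrt n) 0 with h0 | h0
    · have hle : ((n : ℝ) - (1 + 2 * D) * Real.sqrt n) * (volume (ell D 1)).toReal ≤ 0 :=
        mul_nonpos_of_nonpos_of_nonneg h0 hVnn
      exact hle.trans (by positivity)
    · have h := ENNReal.toReal_mono (by simp) hlower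
      rwa [ENNReal.toReal_mul, ENNReal.toReal_ofReal h0.le,
        show ((((zFn D n).ncard : ℕ) : ENNReal)).toReal = ((zFn D n).ncard : ℝ) by simp] at h
  · have hfin : ENNReal.ofReal ((n : ℝ) + (1 + 2 * D) * Real.sqrt n) * volume (ell D 1) ≠ ⊤ :=
      ENNReal.mul_ne_top ENNReal.ofReal_ne_top hVtop
    have h := ENNReal.toReal_mono hfin hupper
    rwa [ENNReal.toReal_mul, ENNReal.toReal_ofReal (by positivity),
      show ((((zFn D n).ncard : ℕ) : ENNReal)).toReal = ((zFn D n).ncard : ℝ) by simp] at h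

lemma sqrt_nat_tendsto : Filter.Tendsto (fun n : ℕ => Real.sqrt n) Filter.atTop Filter.atTop := by
  rw [Filter.tendsto_atTop_atTop]
  intro b
  refine ⟨⌈b⌉₊ ^ 2, fun n hn => ?_⟩
  have h1 : ((⌈b⌉₊ : ℝ)) ^ 2 ≤ (n : ℝ) := by
    exact_mod_cast (by exact_mod_cast hn : ((⌈b⌉₊ ^ 2 : ℕ) : ℝ) ≤ n)
  calc b ≤ (⌈b⌉₊ : ℝ) := Nat.le_ceil b
    _ = Real.sqrt ((⌈b⌉₊ : ℝ) ^ 2) := (Real.sqrt_sq (by positivity)).symm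
    _ ≤ Real.sqrt n := Real.sqrt_le_sqrt h1

/-- The density of lattice points: `|F_n| / n → V`. -/
lemma card_div_tendsto (D : ℕ) (hD : 0 < D) :
    Filter.Tendsto (fun n : ℕ => ((zFn D n).ncard : ℝ) / n) Filter.atTop
      (nhds (volume (ell D 1)).toReal) := by
  have hinv : Filter.Tendsto (fun n : ℕ => (Real.sqrt n)⁻¹) Filter.atTop (nhds 0) :=
    sqrt_nat_tendsto.inv_tendsto_atTop
  set V : ℝ := (volume (ell D 1)).toReal with hV
  set c : ℝ := 1 + 2 * D with hc
  have hVnn : (0 : ℝ) ≤ V := ENNReal.toReal_nonneg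
  have hlow : Filter.Tendsto (fun n : ℕ => (1 - c * (Real.sqrt n)⁻¹) * V)
      Filter.atTop (nhds V) := by
    have h := ((tendsto_const_nhds (x := (1:ℝ))).sub
      ((tendsto_const_nhds (x := c)).mul hinv)).mul (tendsto_const_nhds (x := V))
    simpa using h
  have hhigh : Filter.Tendsto (fun n : ℕ => (1 + c * (Real.sqrt n)⁻¹) * V)
      Filter.atTop (nhds V) := by
    have h := ((tendsto_const_nhds (x := (1:ℝ))).add
      ((tendsto_const_nhds (x := c)).mul hinv)).mul (tendsto_const_nhds (x := V))
    simpa using h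
  refine tendsto_of_tendsto_of_tendsto_of_le_of_le' hlow hhigh ?_ ?_
  · filter_upwards [Filter.eventually_ge_atTop 1] with n hn
    have hnpos : (0 : ℝ) < n := by exact_mod_cast hn
    have hsp : (0 : ℝ) < Real.sqrt n := Real.sqrt_pos.2 hnpos
    have hss : Real.sqrt n * Real.sqrt n = (n : ℝ) := Real.mul_self_sqrt hnpos.le
    have hb := (card_bounds D hD hn).1
    rw [← hV, ← hc] at hb
    rw [le_div_iff₀ hnpos]
    calc (1 - c * (Real.sqrt n)⁻¹) * V * n
        = ((n : ℝ) - c * Real.sqrt n) * V := by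
          field_simp
          ring_nf
          rw [Real.sq_sqrt hnpos.le]
          ring
      _ ≤ ((zFn D n).ncard : ℝ) := hb
  · filter_upwards [Filter.eventually_ge_atTop 1] with n hn
    have hnpos : (0 : ℝ) < n := by exact_mod_cast hn
    have hsp : (0 : ℝ) < Real.sqrt n := Real.sqrt_pos.2 hnpos
    have hss : Real.sqrt n * Real.sqrt n = (n : ℝ) := Real.mul_self_sqrt hnpos.le
    have hb := (card_bounds D hD hn).2
    rw [← hV, ← hc] at hb
    rw [div_le_iff₀ hnpos]
    calc ((zFn D n).ncard : ℝ)
        ≤ ((n : ℝ) + c * Real.sqrt n) * V := hb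
      _ = (1 + c * (Real.sqrt n)⁻¹) * V * n := by
          field_simp
          ring_nf
          rw [Real.sq_sqrt hnpos.le]

end CardFnAux

theorem card_Fn_ratio_tendsto (D : ℕ) (hD : 0 < D) (k : ℕ) (hk : 0 < k) :
    Tendsto (fun n : ℕ => ((zFn D (k * n)).ncard : ℝ) / ((zFn D n).ncard : ℝ))
      atTop (nhds (k : ℝ)) := by
  classical
  have hVpos : 0 < (MeasureTheory.volume (CardFnAux.ell D 1)).toReal :=
    ENNReal.toReal_pos (CardFnAux.vol_ell_pos D).ne'
      (CardFnAux.vol_ell_lt_top D hD).ne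
  set V : ℝ := (MeasureTheory.volume (CardFnAux.ell D 1)).toReal with hV
  have hmain : Tendsto (fun n : ℕ => ((zFn D n).ncard : ℝ) / n) atTop (nhds V) :=
    CardFnAux.card_div_tendsto D hD
  have hkn : Tendsto (fun n : ℕ => k * n) atTop atTop :=
    tendsto_atTop_mono (fun n => Nat.le_mul_of_pos_left n hk) tendsto_id
  have h1 : Tendsto (fun n : ℕ => ((zFn D (k * n)).ncard : ℝ) / ((k * n : ℕ) : ℝ))
      atTop (nhds V) := hmain.comp hkn
  have h2 : Tendsto (fun n : ℕ => (((zFn D n).ncard : ℝ) / n)⁻¹) atTop (nhds V⁻¹) :=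
    hmain.inv₀ hVpos.ne'
  have h3 : Tendsto (fun n : ℕ =>
      ((zFn D (k * n)).ncard : ℝ) / ((k * n : ℕ) : ℝ)
        * (((zFn D n).ncard : ℝ) / n)⁻¹ * k) atTop (nhds ((k : ℝ))) := by
    have h := (h1.mul h2).mul (tendsto_const_nhds (x := (k : ℝ)))
    have heq : V * V⁻¹ * (k : ℝ) = (k : ℝ) := by
      rw [mul_inv_cancel₀ hVpos.ne', one_mul]
    rwa [heq] at h
  set c : ℝ := 1 + 2 * D with hc
  have hcpos : (0 : ℝ) < c := by positivity
  have hev : ∀ᶠ n : ℕ in atTop, 0 < ((zFn D n).ncard : ℝ) := by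
    filter_upwards [CardFnAux.sqrt_nat_tendsto.eventually_gt_atTop c,
      eventually_ge_atTop 1] with n hn hn1
    have hb := (CardFnAux.card_bounds D hD hn1).1
    rw [← hV, ← hc] at hb
    have hsp : (0 : ℝ) < Real.sqrt n := lt_trans hcpos hn
    have hpos : 0 < ((n : ℝ) - c * Real.sqrt n) * V := by
      apply mul_pos _ hVpos
      nlinarith [Real.mul_self_sqrt (show (0:ℝ) ≤ n by positivity)]
    linarith
  refine h3.congr' ?_
  filter_upwards [hev, eventually_ge_atTop 1] with n hg hn1
  have hnpos : (0 : ℝ) < n := by exact_mod_cast hn1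
  have hkpos : (0 : ℝ) < k := by exact_mod_cast hk
  have hknc : ((k * n : ℕ) : ℝ) = (k : ℝ) * n := by push_cast; ring
  rw [hknc]
  field_simp
end

section
/- Let q be a prime power and R = 𝔽_q[t]. Let T, P, A ⊆ R be sets of irreducible polynomials, pairwise disjoint, such that no two elements of T ∪ P ∪ A are associates, with A finite and nonempty, and set m_A = ∏_{a∈A} a. Then S_R(T, A ∪ P) has a density if and only if S_R(T ∪ A, P) has a density, and when these densities exist, d(S_R(T, A ∪ P)) = N(m_A) · d(S_R(T ∪ A, P)). -/
open Polynomial Filter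
open scoped Classical

section aux
variable (F : Type*) [Field F] [Fintype F]

lemma polyNorm_mul (f g : F[X]) : polyNorm F (f*g) = polyNorm F f * polyNorm F g := by
  by_cases hf : f = 0
  · simp [polyNorm, hf]
  by_cases hg : g = 0
  · simp [polyNorm, hg]
  simp [polyNorm, hf, hg, mul_ne_zero hf hg, Polynomial.natDegree_mul hf hg, pow_add]

lemma one_lt_q : 1 < Fintype.card F := Fintype.one_lt_card

lemma polyFn_eq {n : ℕ} (hn : 2 ≤ n) :
    polyFn F n = ↑(degreeLT F (Nat.log (Fintype.card F) (n-1) + 1)) := by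
  have hq := one_lt_q F
  ext x
  simp only [polyFn, Set.mem_setOf_eq, SetLike.mem_coe, Polynomial.mem_degreeLT]
  by_cases hx : x = 0
  · simp [hx, polyNorm]
    omega
  · rw [polyNorm, if_neg hx, Polynomial.degree_eq_natDegree hx]
    rw [show ((Nat.log (Fintype.card F) (n-1) + 1 : ℕ) : WithBot ℕ) = ((Nat.log (Fintype.card F) (n-1) + 1 : ℕ) : ℕ∞) from rfl]
    constructor
    · intro h
      have h1 : Fintype.card F ^ x.natDegree ≤ n - 1 := by omega
      have := (Nat.le_log_iff_pow_le hq (by omega)).mpr h1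
      exact WithBot.coe_lt_coe.mpr (Nat.lt_succ_of_le this)
    · intro h
      have h2 : x.natDegree < Nat.log (Fintype.card F) (n-1) + 1 := by exact WithBot.coe_lt_coe.mp h
      have h3 : x.natDegree ≤ Nat.log (Fintype.card F) (n-1) := by omega
      have := (Nat.le_log_iff_pow_le hq (by omega : n - 1 ≠ 0)).mp h3
      omega

lemma ncard_degreeLT (k : ℕ) :
    ((degreeLT F k : Submodule F F[X]) : Set F[X]).ncard = Fintype.card F ^ k := by
  rw [← Nat.card_coe_set_eq]
  have : Nat.card (degreeLT F k) = Nat.card (Fin k → F) :=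
    Nat.card_congr (Polynomial.degreeLTEquiv F k).toEquiv
  rw [show ((degreeLT F k : Submodule F F[X]) : Set F[X]) = (degreeLT F k : Set F[X]) from rfl]
  simp only [SetLike.coe_sort_coe]
  rw [this]
  simp [Nat.card_eq_fintype_card]

lemma polyFn_finite (n : ℕ) : (polyFn F n).Finite := by
  rcases Nat.lt_or_ge n 2 with h | h
  · apply Set.Finite.subset (Set.finite_singleton (0 : F[X]))
    intro x hx
    simp only [polyFn, Set.mem_setOf_eq, polyNorm] at hx
    by_contra hne
    rw [if_neg (by simpa using hne)] at hx
    have := Nat.one_le_two_pow (n := x.natDegree)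
    have h2 : 2 ≤ Fintype.card F := one_lt_q F
    have : 1 ≤ Fintype.card F ^ x.natDegree := Nat.one_le_pow _ _ (by omega)
    omega
  · rw [polyFn_eq F h]
    have : Finite (degreeLT F (Nat.log (Fintype.card F) (n-1) + 1)) :=
      Finite.of_equiv _ (Polynomial.degreeLTEquiv F _).toEquiv.symm
    exact (degreeLT F _ : Set F[X]).toFinite

lemma ncard_polyFn {n : ℕ} (hn : 2 ≤ n) :
    (polyFn F n).ncard = Fintype.card F ^ (Nat.log (Fintype.card F) (n-1) + 1) := by
  rw [polyFn_eq F hn, ncard_degreeLT]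

lemma le_ncard_polyFn (n : ℕ) : n ≤ (polyFn F n).ncard := by
  rcases Nat.lt_or_ge n 2 with h | h
  · interval_cases n
    · simp
    · have h0 : (0:F[X]) ∈ polyFn F 1 := by simp [polyFn, polyNorm]
      exact (Set.ncard_pos (polyFn_finite F 1)).mpr ⟨0, h0⟩
  · rw [ncard_polyFn F h]
    have hq := one_lt_q F
    have := Nat.lt_pow_succ_log_self hq (n-1)
    simp only [Nat.succ_eq_add_one] at this
    omega

lemma polyIsSqfree_iff (r : F[X]) :
    polyIsSqfree F r ↔ r ≠ 0 ∧ ¬ IsUnit r ∧ Squarefree r := by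
  unfold polyIsSqfree
  refine and_congr_right fun hr => and_congr_right fun hu => ?_
  rw [squarefree_iff_irreducible_sq_not_dvd_of_ne_zero hr]
  simp [pow_two]

lemma sq_prod {s : Finset F[X]} (hi : ∀ a ∈ s, Irreducible a)
    (hna : ∀ a ∈ s, ∀ b ∈ s, a ≠ b → ¬ Associated a b) :
    Squarefree (∏ a ∈ s, a) := by
  induction s using Finset.induction_on with
  | empty => simpa using squarefree_one
  | insert _ _ hns ih =>
    rename_i a s
    rw [Finset.prod_insert hns, squarefree_mul_iff]
    have ha := hi a (Finset.mem_insert_self a s)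
    refine ⟨?_, ha.squarefree, ih (fun b hb => hi b (Finset.mem_insert_of_mem hb))
      (fun b hb c hc => hna b (Finset.mem_insert_of_mem hb) c (Finset.mem_insert_of_mem hc))⟩
    rw [isRelPrime_iff_isCoprime]
    refine IsCoprime.prod_right fun b hb => ?_
    refine ha.coprime_iff_not_dvd.mpr fun hdvd => ?_
    have hb' := hi b (Finset.mem_insert_of_mem hb)
    exact hna a (Finset.mem_insert_self a s) b (Finset.mem_insert_of_mem hb)
      (fun h => hns (h ▸ hb)) (ha.associated_of_dvd hb' hdvd)

section main
variable {T P A : Set F[X]}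
    (hTP : Disjoint T P) (hTA : Disjoint T A) (hPA : Disjoint P A)
    (hirr : ∀ x ∈ T ∪ P ∪ A, Irreducible x)
    (hassoc : ∀ x ∈ T ∪ P ∪ A, ∀ y ∈ T ∪ P ∪ A, x ≠ y → ¬ Associated x y)
    (hA : A.Finite)

include hTP hTA hPA hirr hassoc in
lemma forward_mem (s : F[X]) (hs : s ∈ polySRTP F T (A ∪ P)) :
    (∏ a ∈ hA.toFinset, a) * s ∈ polySRTP F (T ∪ A) P := by
  obtain ⟨hsq, hsT, hsNP⟩ := hs
  rw [polyIsSqfree_iff] at hsq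
  obtain ⟨hs0, hsu, hssq⟩ := hsq
  have hAirr : ∀ a ∈ A, Irreducible a := fun a ha => hirr a (Or.inr ha)
  have hm0 : (∏ a ∈ hA.toFinset, a) ≠ 0 :=
    Finset.prod_ne_zero_iff.mpr fun a ha => (hAirr a (hA.mem_toFinset.mp ha)).ne_zero
  have hmsq : Squarefree (∏ a ∈ hA.toFinset, a) :=
    sq_prod F (fun a ha => hAirr a (hA.mem_toFinset.mp ha))
      (fun a ha b hb hab => hassoc a (Or.inr (hA.mem_toFinset.mp ha))
        b (Or.inr (hA.mem_toFinset.mp hb)) hab)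
  have hcop : IsCoprime (∏ a ∈ hA.toFinset, a) s := by
    refine IsCoprime.prod_left fun a ha => ?_
    exact (hAirr a (hA.mem_toFinset.mp ha)).coprime_iff_not_dvd.mpr
      (hsNP a (Or.inl (hA.mem_toFinset.mp ha)))
  refine ⟨(polyIsSqfree_iff F _).mpr ⟨mul_ne_zero hm0 hs0,
    fun h => hsu (isUnit_of_mul_isUnit_right h), ?_⟩, ?_, ?_⟩
  · exact squarefree_mul_iff.mpr ⟨isRelPrime_iff_isCoprime.mpr hcop, hmsq, hssq⟩
  · rintro t (ht | ha)
    · exact dvd_mul_of_dvd_right (hsT t ht) _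
    · exact dvd_mul_of_dvd_left (Finset.dvd_prod_of_mem _ (hA.mem_toFinset.mpr ha)) s
  · intro p hp hdvd
    have hpirr := hirr p (Or.inl (Or.inr hp))
    rcases hpirr.prime.dvd_or_dvd hdvd with h | h
    · obtain ⟨a, ha, hpa⟩ := (hpirr.prime.dvd_finset_prod_iff _).mp h
      have haA := hA.mem_toFinset.mp ha
      refine hassoc p (Or.inl (Or.inr hp)) a (Or.inr haA) ?_
        (hpirr.associated_of_dvd (hAirr a haA) hpa)
      rintro rfl
      exact (hPA.le_bot ⟨hp, haA⟩)
    · exact hsNP p (Or.inr hp) h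

include hTP hTA hPA hirr hassoc in
lemma backward_mem (u : F[X]) (hu : u ∈ polySRTP F (T ∪ A) P) :
    ∃ s, u = (∏ a ∈ hA.toFinset, a) * s ∧ (s ∈ polySRTP F T (A ∪ P) ∨ IsUnit s) := by
  obtain ⟨hsq, huT, huNP⟩ := hu
  rw [polyIsSqfree_iff] at hsq
  obtain ⟨hu0, huu, husq⟩ := hsq
  have hAirr : ∀ a ∈ A, Irreducible a := fun a ha => hirr a (Or.inr ha)
  have hmdvd : (∏ a ∈ hA.toFinset, a) ∣ u := by
    refine Finset.prod_dvd_of_coprime ?_ (fun a ha => huT a (Or.inr (hA.mem_toFinset.mp ha)))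
    intro a ha b hb hab
    have haA := hA.mem_toFinset.mp ha
    have hbA := hA.mem_toFinset.mp hb
    refine (hAirr a haA).coprime_iff_not_dvd.mpr fun hdvd => ?_
    exact hassoc a (Or.inr haA) b (Or.inr hbA) hab
      ((hAirr a haA).associated_of_dvd (hAirr b hbA) hdvd)
  obtain ⟨s, rfl⟩ := hmdvd
  refine ⟨s, rfl, ?_⟩
  by_cases hsu : IsUnit s
  · exact Or.inr hsu
  have hs0 : s ≠ 0 := fun h => hu0 (by simp [h])
  refine Or.inl ⟨(polyIsSqfree_iff F _).mpr
    ⟨hs0, hsu, husq.squarefree_of_dvd (dvd_mul_left s _)⟩, ?_, ?_⟩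
  · intro t ht
    have htirr := hirr t (Or.inl (Or.inl ht))
    rcases htirr.prime.dvd_or_dvd (huT t (Or.inl ht)) with h | h
    · obtain ⟨a, ha, hta⟩ := (htirr.prime.dvd_finset_prod_iff _).mp h
      have haA := hA.mem_toFinset.mp ha
      refine absurd (htirr.associated_of_dvd (hAirr a haA) hta)
        (hassoc t (Or.inl (Or.inl ht)) a (Or.inr haA) ?_)
      rintro rfl
      exact (hTA.le_bot ⟨ht, haA⟩)
    · exact h
  · rintro x (hx | hx) hdvd
    · have hxm : x ∣ (∏ a ∈ hA.toFinset, a) :=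
        Finset.dvd_prod_of_mem _ (hA.mem_toFinset.mpr hx)
      have : x * x ∣ (∏ a ∈ hA.toFinset, a) * s := mul_dvd_mul hxm hdvd
      exact (hAirr x hx).not_isUnit (husq x this)
    · exact huNP x hx (hdvd.trans (dvd_mul_left s _))

end main

lemma nat_log_pow_mul {b : ℕ} (hb : 1 < b) (e : ℕ) {x : ℕ} (hx : x ≠ 0) :
    Nat.log b (b ^ e * x) = e + Nat.log b x := by
  induction e with
  | zero => simp
  | succ e ih =>
    have h1 : b ^ (e+1) * x = (b ^ e * x) * b := by ring
    rw [h1, Nat.log_mul_base hb (by positivity), ih]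
    omega

lemma nat_log_div_pow (b x e : ℕ) : Nat.log b (x / b ^ e) = Nat.log b x - e := by
  induction e with
  | zero => simp
  | succ e ih =>
    rw [pow_succ, ← Nat.div_div_eq_div_mul, Nat.log_div_base, ih]
    omega

section count
variable {m : F[X]} (hm0 : m ≠ 0)

/-- norm of m -/
local notation "Q" => polyNorm F m

include hm0

lemma Q_pos : 0 < Q := by
  rw [polyNorm, if_neg hm0]; positivity

lemma C1 (S : Set F[X]) {k : ℕ} (hk : 1 ≤ k) :
    ((fun s => m * s) '' S) ∩ polyFn F (Q * (k-1) + 1)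
      = (fun s => m * s) '' (S ∩ polyFn F k) := by
  have hQ := Q_pos F hm0
  ext x
  simp only [Set.mem_inter_iff, Set.mem_image, polyFn, Set.mem_setOf_eq]
  constructor
  · rintro ⟨⟨s, hs, rfl⟩, hlt⟩
    rw [polyNorm_mul] at hlt
    have h1 : Q * polyNorm F s ≤ Q * (k-1) := by omega
    have h2 : polyNorm F s ≤ k - 1 := Nat.le_of_mul_le_mul_left h1 hQ
    exact ⟨s, ⟨hs, by omega⟩, rfl⟩
  · rintro ⟨s, ⟨hs, hlt⟩, rfl⟩
    refine ⟨⟨s, hs, rfl⟩, ?_⟩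
    rw [polyNorm_mul]
    have : polyNorm F s ≤ k - 1 := by omega
    have := Nat.mul_le_mul_left Q this
    omega

lemma C2 (S : Set F[X]) {n : ℕ} (hn : 1 ≤ n) :
    ((fun s => m * s) '' S) ∩ polyFn F n
      = (fun s => m * s) '' (S ∩ polyFn F ((n-1)/Q + 1)) := by
  have hQ := Q_pos F hm0
  ext x
  simp only [Set.mem_inter_iff, Set.mem_image, polyFn, Set.mem_setOf_eq]
  constructor
  · rintro ⟨⟨s, hs, rfl⟩, hlt⟩
    rw [polyNorm_mul] at hlt
    refine ⟨s, ⟨hs, ?_⟩, rfl⟩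
    have := (Nat.le_div_iff_mul_le hQ).mpr
      (by rw [mul_comm]; omega : polyNorm F s * Q ≤ n - 1)
    omega
  · rintro ⟨s, ⟨hs, hlt⟩, rfl⟩
    refine ⟨⟨s, hs, rfl⟩, ?_⟩
    rw [polyNorm_mul]
    have h1 : polyNorm F s ≤ (n-1)/Q := by omega
    have h2 : Q * polyNorm F s ≤ n - 1 := by
      rw [mul_comm]; exact (Nat.le_div_iff_mul_le hQ).mp h1
    omega

lemma C3 {k : ℕ} (hk : 2 ≤ k) :
    (polyFn F (Q * (k-1) + 1)).ncard = Q * (polyFn F k).ncard := by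
  have hq : 1 < Fintype.card F := Fintype.one_lt_card
  have hQ := Q_pos F hm0
  rw [ncard_polyFn F (by have := Nat.mul_pos hQ (by omega : 0 < k-1); omega),
    ncard_polyFn F hk]
  rw [polyNorm, if_neg hm0] at *
  rw [Nat.add_sub_cancel, nat_log_pow_mul hq _ (by omega : k - 1 ≠ 0), pow_add]
  ring

lemma C4 {n : ℕ} (hn : Q + 1 ≤ n) :
    (polyFn F n).ncard = Q * (polyFn F ((n-1)/Q + 1)).ncard := by
  have hq : 1 < Fintype.card F := Fintype.one_lt_card
  have hQ := Q_pos F hm0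
  have h2 : 2 ≤ n := by omega
  have hQn : Q ≤ n - 1 := by omega
  have hdiv : 1 ≤ (n-1)/Q := (Nat.one_le_div_iff hQ).mpr hQn
  rw [ncard_polyFn F h2, ncard_polyFn F (by omega)]
  rw [polyNorm, if_neg hm0] at *
  have h3 : (n-1)/Fintype.card F ^ m.natDegree + 1 - 1 = (n-1)/Fintype.card F ^ m.natDegree := by
    omega
  rw [h3, nat_log_div_pow]
  have hle : m.natDegree ≤ Nat.log (Fintype.card F) (n-1) :=
    (Nat.le_log_iff_pow_le hq (by omega)).mpr hQn
  rw [← pow_add]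
  congr 1
  omega

end count

section glue
variable {m : F[X]} (hm0 : m ≠ 0)
local notation "Q" => polyNorm F m






variable {S₁ S₂ E : Set F[X]} (hE : E.Finite)
  (hid : S₂ = (fun s => m * s) '' S₁ ∪ (S₂ ∩ E))
  (hdisj : Disjoint ((fun s => m * s) '' S₁) E)

include hE hid hdisj in
lemma split (n : ℕ) : ((S₂ ∩ polyFn F n).ncard : ℝ)
    = (((fun s => m * s) '' S₁ ∩ polyFn F n).ncard : ℝ)
      + ((S₂ ∩ E ∩ polyFn F n).ncard : ℝ) := by
  rw [show S₂ ∩ polyFn F n = ((fun s => m * s) '' S₁ ∩ polyFn F n)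
      ∪ (S₂ ∩ E ∩ polyFn F n) by rw [← Set.union_inter_distrib_right, ← hid]]
  rw [Set.ncard_union_eq (Disjoint.mono Set.inter_subset_left
      (Set.inter_subset_left.trans Set.inter_subset_right) hdisj)
      ((polyFn_finite F n).subset Set.inter_subset_right)
      ((polyFn_finite F n).subset Set.inter_subset_right)]
  push_cast; ring

noncomputable def cnt (n : ℕ) : ℝ :=
  ((S₂ ∩ E ∩ polyFn F n).ncard : ℝ) / ((polyFn F n).ncard : ℝ)

include hE in
lemma cnt_to_zero : Tendsto (cnt F (S₂ := S₂) (E := E)) atTop (nhds 0) := by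
  apply squeeze_zero' (g := fun n : ℕ => (E.ncard : ℝ) / n)
  · exact Eventually.of_forall fun n => div_nonneg (by positivity) (by positivity)
  · filter_upwards [eventually_ge_atTop 1] with n hn
    apply div_le_div₀ (by positivity)
    · exact_mod_cast Set.ncard_le_ncard (Set.inter_subset_left.trans Set.inter_subset_right) hE
    · exact_mod_cast hn
    · exact_mod_cast le_ncard_polyFn F n
  · exact tendsto_const_div_atTop_nhds_zero_nat _

include hm0 hE hid hdisj in
lemma glueA (d : ℝ) (hd : polyHasDensity F S₂ d) : polyHasDensity F S₁ ((Q : ℝ) * d) := by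
  have hQ := Q_pos F hm0
  have hQR : (0:ℝ) < (Q : ℝ) := by exact_mod_cast hQ
  have hg : Tendsto (fun k : ℕ => Q * (k-1) + 1) atTop atTop := by
    apply tendsto_atTop_mono _ tendsto_id
    intro k
    have : k - 1 ≤ Q * (k-1) := Nat.le_mul_of_pos_left _ hQ
    simp only [id]; omega
  have hlim : Tendsto (fun k : ℕ => (Q : ℝ) *
      ((((S₂ ∩ polyFn F (Q * (k-1) + 1)).ncard : ℝ) / ((polyFn F (Q * (k-1) + 1)).ncard : ℝ))
        - cnt F (S₂ := S₂) (E := E) (Q * (k-1) + 1))) atTop (nhds ((Q : ℝ) * (d - 0))) :=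
    ((hd.comp hg).sub ((cnt_to_zero F hE).comp hg)).const_mul _
  rw [mul_sub, mul_zero, sub_zero] at hlim
  refine Tendsto.congr' ?_ hlim
  filter_upwards [eventually_ge_atTop 2] with k hk
  have hc : (0:ℝ) < ((polyFn F k).ncard : ℝ) := by
      have := le_ncard_polyFn F k; exact_mod_cast (by omega : 0 < (polyFn F k).ncard)
  have h3 : ((polyFn F (Q * (k-1) + 1)).ncard : ℝ) = (Q : ℝ) * ((polyFn F k).ncard : ℝ) := by
    exact_mod_cast C3 F hm0 hk
  have h1 : (((fun s => m * s) '' S₁ ∩ polyFn F (Q * (k-1) + 1)).ncard : ℝ)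
      = ((S₁ ∩ polyFn F k).ncard : ℝ) := by
    rw [C1 F hm0 S₁ (by omega : 1 ≤ k),
      Set.ncard_image_of_injective _ (mul_right_injective₀ hm0)]
  have h2 := split F hE hid hdisj (Q * (k-1) + 1)
  unfold cnt
  rw [h2, h1, h3]
  field_simp
  ring

include hm0 hE hid hdisj in
lemma glueB (d : ℝ) (hd : polyHasDensity F S₁ d) : polyHasDensity F S₂ ((Q : ℝ)⁻¹ * d) := by
  have hQ := Q_pos F hm0
  have hQR : (0:ℝ) < (Q : ℝ) := by exact_mod_cast hQ
  have hh : Tendsto (fun n : ℕ => (n-1)/Q + 1) atTop atTop := by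
    rw [tendsto_atTop_atTop]
    intro b
    refine ⟨Q * b + 1, fun n hn => ?_⟩
    rcases Nat.eq_zero_or_pos b with rfl | hb
    · exact Nat.zero_le _
    have h0 : Q * (b-1) + Q ≤ Q * b := by
      rw [← Nat.mul_succ]
      exact Nat.mul_le_mul_left _ (by omega)
    have h1 : (b-1) * Q ≤ n - 1 := by rw [mul_comm]; omega
    have h2 := (Nat.le_div_iff_mul_le hQ).mpr h1
    omega
  have hlim : Tendsto (fun n : ℕ => (Q : ℝ)⁻¹ *
      (((S₁ ∩ polyFn F ((n-1)/Q + 1)).ncard : ℝ) / ((polyFn F ((n-1)/Q + 1)).ncard : ℝ))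
        + cnt F (S₂ := S₂) (E := E) n) atTop (nhds ((Q : ℝ)⁻¹ * d + 0)) :=
    ((hd.comp hh).const_mul _).add (cnt_to_zero F hE)
  rw [add_zero] at hlim
  refine hlim.congr' ?_
  filter_upwards [eventually_ge_atTop (Q + 1)] with n hn
  have hc : (0:ℝ) < ((polyFn F ((n-1)/Q + 1)).ncard : ℝ) := by
    have := le_ncard_polyFn F ((n-1)/Q + 1)
    exact_mod_cast lt_of_lt_of_le (Nat.succ_pos _) this
  have h4 : ((polyFn F n).ncard : ℝ) = (Q : ℝ) * ((polyFn F ((n-1)/Q + 1)).ncard : ℝ) := by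
    exact_mod_cast C4 F hm0 hn
  have h1 : (((fun s => m * s) '' S₁ ∩ polyFn F n).ncard : ℝ)
      = ((S₁ ∩ polyFn F ((n-1)/Q + 1)).ncard : ℝ) := by
    rw [C2 F hm0 S₁ (by omega : 1 ≤ n),
      Set.ncard_image_of_injective _ (mul_right_injective₀ hm0)]
  have h2 := split F hE hid hdisj n
  rw [h1] at h2
  unfold cnt
  rw [h2, h4]
  field_simp

end glue

end aux

theorem density_transfer_lemma (F : Type*) [Field F] [Fintype F]
    (T P A : Set F[X])
    (hTP : Disjoint T P) (hTA : Disjoint T A) (hPA : Disjoint P A)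
    (hirr : ∀ x ∈ T ∪ P ∪ A, Irreducible x)
    (hassoc : ∀ x ∈ T ∪ P ∪ A, ∀ y ∈ T ∪ P ∪ A, x ≠ y → ¬ Associated x y)
    (hA : A.Finite) (hAne : A.Nonempty) :
    ((∃ d : ℝ, polyHasDensity F (polySRTP F T (A ∪ P)) d) ↔
      (∃ d : ℝ, polyHasDensity F (polySRTP F (T ∪ A) P) d)) ∧
    ∀ d : ℝ, polyHasDensity F (polySRTP F (T ∪ A) P) d →
      polyHasDensity F (polySRTP F T (A ∪ P))
        ((polyNorm F (∏ a ∈ hA.toFinset, a) : ℝ) * d) := by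
  set m := ∏ a ∈ hA.toFinset, a with hm
  have hAirr : ∀ a ∈ A, Irreducible a := fun a ha => hirr a (Or.inr ha)
  have hm0 : m ≠ 0 :=
    Finset.prod_ne_zero_iff.mpr fun a ha => (hAirr a (hA.mem_toFinset.mp ha)).ne_zero
  set S₁ := polySRTP F T (A ∪ P) with hS₁
  set S₂ := polySRTP F (T ∪ A) P with hS₂
  set E : Set F[X] := (fun c => m * c) '' {c : F[X] | IsUnit c} with hEdef
  have hE : E.Finite := by
    apply Set.Finite.image
    have hsub : {c : F[X] | IsUnit c} ⊆ Set.range (Polynomial.C : F → F[X]) := by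
      intro c hc
      obtain ⟨r, -, hr⟩ := Polynomial.isUnit_iff.mp hc
      exact ⟨r, hr⟩
    exact (Set.finite_range _).subset hsub
  have hid : S₂ = (fun s => m * s) '' S₁ ∪ (S₂ ∩ E) := by
    apply Set.Subset.antisymm
    · intro u hu
      obtain ⟨s, rfl, hs | hs⟩ := backward_mem F hTP hTA hPA hirr hassoc hA u hu
      · exact Or.inl ⟨s, hs, rfl⟩
      · exact Or.inr ⟨hu, ⟨s, hs, rfl⟩⟩
    · rintro u (⟨s, hs, rfl⟩ | ⟨hu, -⟩)
      · exact forward_mem F hTP hTA hPA hirr hassoc hA s hs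
      · exact hu
  have hdisj : Disjoint ((fun s => m * s) '' S₁) E := by
    rw [Set.disjoint_left]
    rintro x ⟨s, hs, rfl⟩ ⟨c, hc, hcx⟩
    have hsc : s = c := mul_left_cancel₀ hm0 hcx.symm
    exact hs.1.2.1 (hsc ▸ hc)
  exact ⟨⟨fun ⟨d, hd⟩ => ⟨_, glueB F hm0 hE hid hdisj d hd⟩,
    fun ⟨d, hd⟩ => ⟨_, glueA F hm0 hE hid hdisj d hd⟩⟩,
    fun d hd => glueA F hm0 hE hid hdisj d hd⟩
end

section
/- Let D be a positive integer and R = ℤ[√−D]. For any r, m ∈ R with m ≠ 0, the residue class r + mR has density 1/N(m); that is, |(r + mR) ∩ F_n| / |F_n| → 1/N(m) as n → ∞. -/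
open Filter

notation:max "cabs " x:max => ‖(x : ℂ)‖

section DensityAux
open MeasureTheory Set

noncomputable def fC (D : ℕ) (x : ℤ√(-(D:ℤ))) : ℂ := ⟨(x.re : ℝ), (x.im : ℝ) * Real.sqrt D⟩

lemma fC_re (D : ℕ) (x : ℤ√(-(D:ℤ))) : (fC D x).re = (x.re : ℝ) := rfl
lemma fC_im (D : ℕ) (x : ℤ√(-(D:ℤ))) : (fC D x).im = (x.im : ℝ) * Real.sqrt D := rfl

lemma fC_add (D : ℕ) (x y : ℤ√(-(D:ℤ))) : fC D (x + y) = fC D x + fC D y := by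
  apply Complex.ext <;>
    simp [fC, Zsqrtd.re_add, Zsqrtd.im_add, Complex.add_re, Complex.add_im] <;> push_cast <;> ring

lemma fC_mul (D : ℕ) (x y : ℤ√(-(D:ℤ))) : fC D (x * y) = fC D x * fC D y := by
  have h : Real.sqrt D * Real.sqrt D = (D : ℝ) := Real.mul_self_sqrt (by positivity)
  apply Complex.ext <;>
      simp [fC, Zsqrtd.re_mul, Zsqrtd.im_mul, Complex.mul_re, Complex.mul_im] <;> push_cast
  · linear_combination ((x.im:ℝ) * y.im) * h
  · ring

lemma normSq_fC (D : ℕ) (x : ℤ√(-(D:ℤ))) : Complex.normSq (fC D x) = (zNorm D x : ℝ) := by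
  have h : Real.sqrt D * Real.sqrt D = (D : ℝ) := Real.mul_self_sqrt (by positivity)
  have hnn : (0:ℤ) ≤ x.re ^ 2 + (D : ℤ) * x.im ^ 2 := by positivity
  have h1 : (zNorm D x : ℤ) = x.re ^ 2 + (D : ℤ) * x.im ^ 2 := Int.toNat_of_nonneg hnn
  have h2 : (zNorm D x : ℝ) = (x.re : ℝ) ^ 2 + (D : ℝ) * (x.im : ℝ) ^ 2 := by
    exact_mod_cast congrArg (Int.cast : ℤ → ℝ) h1
  rw [h2, Complex.normSq_apply, fC_re, fC_im]; nlinarith [h]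

lemma fC_eq_zero (D : ℕ) (hD : 0 < D) {x : ℤ√(-(D:ℤ))} (h : fC D x = 0) : x = 0 := by
  have h1 : (x.re : ℝ) = 0 := congrArg Complex.re h
  have h2 : (x.im : ℝ) * Real.sqrt D = 0 := congrArg Complex.im h
  have hs : Real.sqrt D ≠ 0 := by positivity
  have h3 : (x.im : ℝ) = 0 := by rcases mul_eq_zero.1 h2 with h | h; exact h; exact absurd h hs
  have : x.re = 0 := by exact_mod_cast h1
  have : x.im = 0 := by exact_mod_cast h3
  ext <;> simp_all

lemma abs_fC_lt_iff (D : ℕ) (x : ℤ√(-(D:ℤ))) (n : ℕ) :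
    cabs (fC D x) < Real.sqrt n ↔ zNorm D x < n := by
  rw [Complex.norm_def, normSq_fC]
  rw [Real.sqrt_lt_sqrt_iff (by positivity)]
  exact_mod_cast Iff.rfl

lemma zNorm_lt_int (D : ℕ) {x : ℤ√(-(D:ℤ))} {n : ℕ} (h : zNorm D x < n) :
    x.re ^ 2 + (D : ℤ) * x.im ^ 2 < (n : ℤ) := by
  have hnn : (0:ℤ) ≤ x.re ^ 2 + (D : ℤ) * x.im ^ 2 := by positivity
  have h1 : (zNorm D x : ℤ) = x.re ^ 2 + (D : ℤ) * x.im ^ 2 := Int.toNat_of_nonneg hnn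
  rw [← h1]; exact_mod_cast h

lemma zFn_finite (D : ℕ) (hD : 0 < D) (n : ℕ) : (zFn D n).Finite := by
  have hsub : zFn D n ⊆ (fun p : ℤ × ℤ => (⟨p.1, p.2⟩ : ℤ√(-(D:ℤ)))) ''
      (Set.Icc (-(n:ℤ)) n ×ˢ Set.Icc (-(n:ℤ)) n) := by
    intro x hx
    have h := zNorm_lt_int D hx
    have hD1 : (1 : ℤ) ≤ (D : ℤ) := by exact_mod_cast hD
    have e1 : x.re ≤ x.re ^ 2 := Int.le_self_sq x.re
    have e2 : -x.re ≤ (-x.re) ^ 2 := Int.le_self_sq (-x.re)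
    have e3 : x.im ≤ x.im ^ 2 := Int.le_self_sq x.im
    have e4 : -x.im ≤ (-x.im) ^ 2 := Int.le_self_sq (-x.im)
    refine ⟨(x.re, x.im), ⟨⟨?_, ?_⟩, ?_, ?_⟩, by ext <;> rfl⟩ <;> nlinarith [sq_nonneg x.re, sq_nonneg x.im]
  exact Set.Finite.subset (Set.Finite.image _ ((Set.finite_Icc _ _).prod (Set.finite_Icc _ _))) hsub

lemma det_mulRight (z : ℂ) : LinearMap.det (LinearMap.mulRight ℝ z) = Complex.normSq z := by
  rw [← LinearMap.det_toMatrix Complex.basisOneI, Matrix.det_fin_two]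
  simp only [LinearMap.toMatrix_apply, Complex.coe_basisOneI, Complex.coe_basisOneI_repr,
    LinearMap.mulRight_apply]
  simp [Complex.normSq_apply, Complex.mul_re, Complex.mul_im]

def Phi (D : ℕ) : Set ℂ := {z : ℂ | z.re ∈ Set.Ico (0:ℝ) 1 ∧ z.im ∈ Set.Ico (0:ℝ) (Real.sqrt D)}

noncomputable def cell (D : ℕ) (c μ : ℂ) (y : ℤ√(-(D:ℤ))) : Set ℂ :=
  {w : ℂ | (w - c) / μ - fC D y ∈ Phi D}

lemma mem_cell_iff (D : ℕ) (c μ : ℂ) (y : ℤ√(-(D:ℤ))) (w : ℂ) :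
    w ∈ cell D c μ y ↔
      (0 ≤ ((w - c) / μ).re - (y.re : ℝ) ∧ ((w - c) / μ).re - (y.re : ℝ) < 1) ∧
      (0 ≤ ((w - c) / μ).im - (y.im : ℝ) * Real.sqrt D ∧
        ((w - c) / μ).im - (y.im : ℝ) * Real.sqrt D < Real.sqrt D) := by
  simp [cell, Phi, Complex.sub_re, Complex.sub_im, fC_re, fC_im, Set.mem_Ico]

lemma phi_eq (D : ℕ) : Phi D =
    Complex.measurableEquivRealProd ⁻¹' (Set.Ico (0:ℝ) 1 ×ˢ Set.Ico (0:ℝ) (Real.sqrt D)) := by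
  ext z
  simp [Phi, Complex.measurableEquivRealProd_apply, Set.mem_prod]

lemma measurableSet_Phi (D : ℕ) : MeasurableSet (Phi D) := by
  rw [phi_eq]
  exact Complex.measurableEquivRealProd.measurable (measurableSet_Ico.prod measurableSet_Ico)

lemma volume_Phi (D : ℕ) : volume (Phi D) = ENNReal.ofReal (Real.sqrt D) := by
  rw [phi_eq, Complex.volume_preserving_equiv_real_prod.measure_preimage
    (measurableSet_Ico.prod measurableSet_Ico).nullMeasurableSet]
  rw [MeasureTheory.Measure.volume_eq_prod, MeasureTheory.Measure.prod_prod,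
    Real.volume_Ico, Real.volume_Ico]
  simp

lemma measurableSet_cell (D : ℕ) (c μ : ℂ) (y : ℤ√(-(D:ℤ))) :
    MeasurableSet (cell D c μ y) := by
  have h : cell D c μ y = (fun w : ℂ => (w - c) / μ - fC D y) ⁻¹' (Phi D) := rfl
  rw [h]
  have hm : Measurable (fun w : ℂ => (w - c) / μ - fC D y) := by fun_prop
  exact hm (measurableSet_Phi D)

lemma volume_cell (D : ℕ) (c μ : ℂ) (hμ : μ ≠ 0) (y : ℤ√(-(D:ℤ))) :
    volume (cell D c μ y) = ENNReal.ofReal (Complex.normSq μ * Real.sqrt D) := by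
  have hdet : LinearMap.det (LinearMap.mulRight ℝ (μ⁻¹ : ℂ)) ≠ 0 := by
    rw [det_mulRight]
    simpa [Complex.normSq_eq_zero] using inv_ne_zero hμ
  have hdecomp : cell D c μ y = (LinearMap.mulRight ℝ (μ⁻¹ : ℂ)) ⁻¹'
      ((fun w : ℂ => w + (-(c * μ⁻¹) - fC D y)) ⁻¹' (Phi D)) := by
    ext w
    have he : (w - c) / μ - fC D y = (w * μ⁻¹) + (-(c * μ⁻¹) - fC D y) := by
      rw [div_eq_mul_inv]; ring
    simp [cell, Set.mem_preimage, LinearMap.mulRight_apply, he]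
  rw [hdecomp, MeasureTheory.Measure.addHaar_preimage_linearMap volume hdet,
    measure_preimage_add_right, volume_Phi, det_mulRight, Complex.normSq_inv, inv_inv,
    abs_of_nonneg (Complex.normSq_nonneg μ), ← ENNReal.ofReal_mul (Complex.normSq_nonneg μ)]

lemma existsUnique_cell (D : ℕ) (hD : 0 < D) (c μ : ℂ) (w : ℂ) :
    ∃! y : ℤ√(-(D:ℤ)), w ∈ cell D c μ y := by
  have hs : (0:ℝ) < Real.sqrt D := Real.sqrt_pos.2 (by exact_mod_cast hD)
  set v : ℂ := (w - c) / μ with hv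
  set u : ℝ := v.im / Real.sqrt D with hu
  have him : v.im = u * Real.sqrt D := by rw [hu, div_mul_cancel₀ _ hs.ne']
  refine ⟨⟨⌊v.re⌋, ⌊u⌋⟩, ?_, ?_⟩
  · show w ∈ cell D c μ _
    rw [mem_cell_iff]
    refine ⟨⟨?_, ?_⟩, ?_, ?_⟩
    · have := Int.fract_nonneg v.re; rw [Int.fract] at this; exact this
    · have := Int.fract_lt_one v.re; rw [Int.fract] at this; exact this
    · have h0 := Int.fract_nonneg u
      rw [Int.fract] at h0
      have : v.im - (⌊u⌋ : ℝ) * Real.sqrt D = (u - ⌊u⌋) * Real.sqrt D := by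
        rw [him]; ring
      rw [this]
      positivity
    · have h1 := Int.fract_lt_one u
      rw [Int.fract] at h1
      have : v.im - (⌊u⌋ : ℝ) * Real.sqrt D = (u - ⌊u⌋) * Real.sqrt D := by
        rw [him]; ring
      rw [this]
      calc (u - ⌊u⌋) * Real.sqrt D < 1 * Real.sqrt D := by
            exact mul_lt_mul_of_pos_right h1 hs
        _ = Real.sqrt D := one_mul _
  · rintro y hy
    rw [mem_cell_iff] at hy
    obtain ⟨⟨h1, h2⟩, h3, h4⟩ := hy
    have hre : ⌊v.re⌋ = y.re := by
      rw [Int.floor_eq_iff]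
      constructor <;> [linarith; linarith]
    have him' : ⌊u⌋ = y.im := by
      rw [Int.floor_eq_iff]
      constructor
      · rw [hu, le_div_iff₀ hs]; linarith
      · rw [hu, div_lt_iff₀ hs]; push_cast; linarith
    ext <;> simp [← hre, ← him']

lemma cell_dist (D : ℕ) (c μ : ℂ) (hμ : μ ≠ 0) {y : ℤ√(-(D:ℤ))} {w : ℂ}
    (h : w ∈ cell D c μ y) :
    cabs (w - (c + μ * fC D y)) ≤ cabs μ * (1 + Real.sqrt D) := by
  set z : ℂ := (w - c) / μ - fC D y with hz
  have hw : w - (c + μ * fC D y) = μ * z := by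
    rw [hz]; field_simp; ring
  rw [hw, norm_mul]
  apply mul_le_mul_of_nonneg_left _ (norm_nonneg μ)
  rw [mem_cell_iff] at h
  obtain ⟨⟨h1, h2⟩, h3, h4⟩ := h
  calc cabs z ≤ |z.re| + |z.im| := Complex.norm_le_abs_re_add_abs_im z
    _ ≤ 1 + Real.sqrt D := by
        have hzre : z.re = ((w - c) / μ).re - (y.re : ℝ) := by
          rw [hz]; simp [Complex.sub_re, fC_re]
        have hzim : z.im = ((w - c) / μ).im - (y.im : ℝ) * Real.sqrt D := by
          rw [hz]; simp [Complex.sub_im, fC_im]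
        rw [hzre, hzim, abs_of_nonneg h1, abs_of_nonneg h3]
        have : (0:ℝ) ≤ Real.sqrt D := Real.sqrt_nonneg _
        gcongr <;> linarith

lemma S_finite (D : ℕ) (hD : 0 < D) (c μ : ℂ) (hμ : μ ≠ 0) (t : ℝ) :
    {y : ℤ√(-(D:ℤ)) | cabs (c + μ * fC D y) < t}.Finite := by
  set M : ℝ := (cabs c + t) / cabs μ with hM
  set B : ℕ := ⌈M ^ 2⌉₊ + 1 with hB
  have hμ0 : 0 < cabs μ := norm_pos_iff.mpr hμ
  have hsub : {y : ℤ√(-(D:ℤ)) | cabs (c + μ * fC D y) < t} ⊆ zFn D B := by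
    intro y hy
    simp only [Set.mem_setOf_eq] at hy
    have h1 : cabs (μ * fC D y) ≤ cabs (c + μ * fC D y) + cabs c := by
      calc cabs (μ * fC D y) = cabs ((c + μ * fC D y) + (-c)) := by ring_nf
        _ ≤ cabs (c + μ * fC D y) + cabs (-c) := norm_add_le _ _
        _ = cabs (c + μ * fC D y) + cabs c := by rw [norm_neg]
    have h2 : cabs μ * cabs (fC D y) < cabs c + t := by
      rw [← norm_mul]; linarith
    have h3 : cabs (fC D y) < M := by
      rw [hM, lt_div_iff₀ hμ0]; linarith [mul_comm (cabs μ) (cabs (fC D y))]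
    have h4 : (zNorm D y : ℝ) < M ^ 2 := by
      rw [← normSq_fC, ← Complex.sq_norm]
      have h0 : 0 ≤ cabs (fC D y) := norm_nonneg _
      nlinarith
    have h5 : (zNorm D y : ℝ) < (B : ℝ) := by
      have := Nat.le_ceil (M ^ 2)
      push_cast [hB]
      linarith
    exact_mod_cast h5
  exact (zFn_finite D hD B).subset hsub

lemma card_sandwich (D : ℕ) (hD : 0 < D) (c μ : ℂ) (hμ : μ ≠ 0) (t : ℝ)
    (ht : cabs μ * (1 + Real.sqrt D) ≤ t) :
    ENNReal.ofReal ((t - cabs μ * (1 + Real.sqrt D)) ^ 2) * volume (Metric.ball (0:ℂ) 1)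
      ≤ ({y : ℤ√(-(D:ℤ)) | cabs (c + μ * fC D y) < t}.ncard : ENNReal) *
          ENNReal.ofReal (Complex.normSq μ * Real.sqrt D) ∧
    ({y : ℤ√(-(D:ℤ)) | cabs (c + μ * fC D y) < t}.ncard : ENNReal) *
          ENNReal.ofReal (Complex.normSq μ * Real.sqrt D)
      ≤ ENNReal.ofReal ((t + cabs μ * (1 + Real.sqrt D)) ^ 2) * volume (Metric.ball (0:ℂ) 1) := by
  set ρ : ℝ := cabs μ * (1 + Real.sqrt D) with hρ
  have hρ0 : 0 ≤ ρ := by positivity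
  have ht0 : 0 ≤ t := le_trans hρ0 ht
  have hfin := S_finite D hD c μ hμ t
  set s : Finset (ℤ√(-(D:ℤ))) := hfin.toFinset with hs
  have hmem : ∀ y, y ∈ s ↔ cabs (c + μ * fC D y) < t := by
    intro y; rw [hs, Set.Finite.mem_toFinset]; rfl
  have hdisj : (s : Set (ℤ√(-(D:ℤ)))).PairwiseDisjoint (cell D c μ) := by
    intro y₁ _ y₂ _ hne
    refine Set.disjoint_left.2 fun w hw₁ hw₂ => hne ?_
    obtain ⟨y₀, _, huniq⟩ := existsUnique_cell D hD c μ w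
    exact (huniq y₁ hw₁).trans (huniq y₂ hw₂).symm
  have hvol : volume (⋃ y ∈ s, cell D c μ y) =
      (s.card : ENNReal) * ENNReal.ofReal (Complex.normSq μ * Real.sqrt D) := by
    rw [measure_biUnion_finset hdisj (fun y _ => measurableSet_cell D c μ y)]
    simp [volume_cell D c μ hμ, Finset.sum_const, nsmul_eq_mul]
  have hcard : ({y : ℤ√(-(D:ℤ)) | cabs (c + μ * fC D y) < t}.ncard : ENNReal)
      = (s.card : ENNReal) := by
    rw [Set.ncard_eq_toFinset_card _ hfin]
  constructor
  · -- lower bound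
    have hsub2 : Metric.ball (0:ℂ) (t - ρ) ⊆ ⋃ y ∈ s, cell D c μ y := by
      intro w hw
      obtain ⟨y, hy, _⟩ := existsUnique_cell D hD c μ w
      have h2 := cell_dist D c μ hμ hy
      have hwabs : cabs w < t - ρ := by
        simpa [Complex.dist_eq] using hw
      have h3 : cabs (c + μ * fC D y) < t := by
        calc cabs (c + μ * fC D y)
            = cabs (w - (w - (c + μ * fC D y))) := by ring_nf
          _ ≤ cabs w + cabs (w - (c + μ * fC D y)) := by
              calc cabs (w - (w - (c + μ * fC D y)))
                  ≤ cabs w + cabs (-(w - (c + μ * fC D y))) := by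
                    rw [sub_eq_add_neg]; exact norm_add_le _ _
                _ = cabs w + cabs (w - (c + μ * fC D y)) := by rw [norm_neg]
          _ < (t - ρ) + ρ := by linarith
          _ = t := by ring
      exact Set.mem_biUnion ((hmem y).2 h3) hy
    calc ENNReal.ofReal ((t - ρ) ^ 2) * volume (Metric.ball (0:ℂ) 1)
        = volume (Metric.ball (0:ℂ) (t - ρ)) := by
          rw [MeasureTheory.Measure.addHaar_ball volume (0:ℂ) (by linarith : (0:ℝ) ≤ t - ρ),
            Complex.finrank_real_complex]
      _ ≤ volume (⋃ y ∈ s, cell D c μ y) := measure_mono hsub2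
      _ = _ := by rw [hvol, hcard]
  · -- upper bound
    have hsub1 : (⋃ y ∈ s, cell D c μ y) ⊆ Metric.ball (0:ℂ) (t + ρ) := by
      intro w hw
      obtain ⟨y, hys, hwc⟩ := Set.mem_iUnion₂.1 hw
      have h1 : cabs (c + μ * fC D y) < t := (hmem y).1 hys
      have h2 := cell_dist D c μ hμ hwc
      have : cabs w ≤ cabs (w - (c + μ * fC D y)) + cabs (c + μ * fC D y) := by
        calc cabs w = cabs ((w - (c + μ * fC D y)) + (c + μ * fC D y)) := by ring_nf
          _ ≤ _ := norm_add_le _ _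
      simp only [Metric.mem_ball, Complex.dist_eq, sub_zero]
      linarith
    calc ({y : ℤ√(-(D:ℤ)) | cabs (c + μ * fC D y) < t}.ncard : ENNReal) *
          ENNReal.ofReal (Complex.normSq μ * Real.sqrt D)
        = volume (⋃ y ∈ s, cell D c μ y) := by rw [hvol, hcard]
      _ ≤ volume (Metric.ball (0:ℂ) (t + ρ)) := measure_mono hsub1
      _ = ENNReal.ofReal ((t + ρ) ^ 2) * volume (Metric.ball (0:ℂ) 1) := by
          rw [MeasureTheory.Measure.addHaar_ball volume (0:ℂ) (by linarith : (0:ℝ) ≤ t + ρ),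
            Complex.finrank_real_complex]

lemma count_real (D : ℕ) (hD : 0 < D) (c μ : ℂ) (hμ : μ ≠ 0) (t : ℝ)
    (ht : cabs μ * (1 + Real.sqrt D) ≤ t) :
    (t - cabs μ * (1 + Real.sqrt D)) ^ 2 * (volume (Metric.ball (0:ℂ) 1)).toReal
        ≤ ({y : ℤ√(-(D:ℤ)) | cabs (c + μ * fC D y) < t}.ncard : ℝ) *
            (Complex.normSq μ * Real.sqrt D) ∧
    ({y : ℤ√(-(D:ℤ)) | cabs (c + μ * fC D y) < t}.ncard : ℝ) *
            (Complex.normSq μ * Real.sqrt D)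
        ≤ (t + cabs μ * (1 + Real.sqrt D)) ^ 2 * (volume (Metric.ball (0:ℂ) 1)).toReal := by
  obtain ⟨h1, h2⟩ := card_sandwich D hD c μ hμ t ht
  have hVtop : volume (Metric.ball (0:ℂ) 1) ≠ ⊤ := measure_ball_lt_top.ne
  have hnn : (0:ℝ) ≤ Complex.normSq μ * Real.sqrt D :=
    mul_nonneg (Complex.normSq_nonneg μ) (Real.sqrt_nonneg _)
  constructor
  · have := ENNReal.toReal_mono
      (ENNReal.mul_ne_top (ENNReal.natCast_ne_top _) ENNReal.ofReal_ne_top) h1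
    rwa [ENNReal.toReal_mul, ENNReal.toReal_mul, ENNReal.toReal_ofReal (sq_nonneg _),
      ENNReal.toReal_natCast, ENNReal.toReal_ofReal hnn] at this
  · have := ENNReal.toReal_mono (ENNReal.mul_ne_top ENNReal.ofReal_ne_top hVtop) h2
    rwa [ENNReal.toReal_mul, ENNReal.toReal_mul, ENNReal.toReal_ofReal (sq_nonneg _),
      ENNReal.toReal_natCast, ENNReal.toReal_ofReal hnn] at this

lemma tendsto_sqrt_nat : Tendsto (fun n : ℕ => Real.sqrt n) atTop atTop := by
  have h := (tendsto_rpow_atTop (by norm_num : (0:ℝ) < 1/2)).comp (tendsto_natCast_atTop_atTop (R := ℝ))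
  apply h.congr
  intro n
  simp [Function.comp, Real.sqrt_eq_rpow]

lemma tendsto_aux (a b : ℝ) :
    Tendsto (fun n : ℕ => (Real.sqrt n + a) ^ 2 / (Real.sqrt n + b) ^ 2) atTop (nhds 1) := by
  have h1 : Tendsto (fun t : ℝ => 1 + (a - b) / (t + b)) atTop (nhds 1) := by
    have hb : Tendsto (fun t : ℝ => t + b) atTop atTop :=
      tendsto_atTop_add_const_right _ b tendsto_id
    have := Tendsto.div_atTop (tendsto_const_nhds (x := a - b)) hb
    simpa using tendsto_const_nhds.add this
  have h2 : Tendsto (fun t : ℝ => (1 + (a - b) / (t + b)) ^ 2) atTop (nhds 1) := by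
    simpa using h1.pow 2
  have h3 : Tendsto (fun t : ℝ => (t + a) ^ 2 / (t + b) ^ 2) atTop (nhds 1) := by
    apply h2.congr'
    filter_upwards [eventually_ge_atTop (|b| + 1)] with t htt
    have hb0 : t + b ≠ 0 := by
      have := abs_le.1 (le_refl |b|)
      nlinarith [abs_nonneg b, neg_abs_le b]
    have he : 1 + (a - b) / (t + b) = (t + a) / (t + b) := by field_simp; ring
    rw [he, div_pow]
  exact h3.comp tendsto_sqrt_nat

lemma ratio_eq (X Y V NR s : ℝ) (hY : Y ≠ 0) (hNR : NR ≠ 0) (hs : s ≠ 0) (hV : V ≠ 0) :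
    (X * V / (NR * s)) / (Y * V / s) = X / Y * (1 / NR) := by
  field_simp


end DensityAux

open MeasureTheory Set in
theorem density_residue_class_quadratic (D : ℕ) (hD : 0 < D)
    (r m : ℤ√(-(D : ℤ))) (hm : m ≠ 0) :
    zHasDensity D {x | ∃ y : ℤ√(-(D : ℤ)), x = r + m * y} (1 / (zNorm D m : ℝ)) := by
  classical
  set c : ℂ := fC D r with hc
  set μ : ℂ := fC D m with hμdef
  have hμ : μ ≠ 0 := fun h => hm (fC_eq_zero D hD h)
  set NR : ℝ := (zNorm D m : ℝ) with hNR
  have hNS : Complex.normSq μ = NR := normSq_fC D m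
  have hNRpos : 0 < NR := by rw [← hNS]; exact Complex.normSq_pos.2 hμ
  have hsD : 0 < Real.sqrt D := Real.sqrt_pos.2 (by exact_mod_cast hD)
  set V : ℝ := (volume (Metric.ball (0:ℂ) 1)).toReal with hV
  have hVpos : 0 < V := by
    rw [hV]
    exact ENNReal.toReal_pos (Metric.measure_ball_pos volume 0 one_pos).ne' measure_ball_lt_top.ne
  set ρm : ℝ := cabs μ * (1 + Real.sqrt D) with hρm
  set ρ1 : ℝ := cabs (1:ℂ) * (1 + Real.sqrt D) with hρ1
  have hρm0 : 0 ≤ ρm := by positivity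
  have hρ10 : 0 ≤ ρ1 := by positivity
  -- subtraction compatibility and injectivity
  have hfCsub : ∀ y₁ y₂ : ℤ√(-(D:ℤ)), fC D (y₁ - y₂) = fC D y₁ - fC D y₂ := by
    intro y₁ y₂
    have h := fC_add D (y₁ - y₂) y₂
    rw [sub_add_cancel] at h
    exact eq_sub_of_add_eq h.symm
  have hinj : Function.Injective (fun y : ℤ√(-(D:ℤ)) => r + m * y) := by
    intro y₁ y₂ h
    have h2 : m * y₁ = m * y₂ := add_left_cancel h
    have h3 : μ * fC D y₁ = μ * fC D y₂ := by
      rw [hμdef, ← fC_mul, ← fC_mul, h2]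
    have h4 : fC D y₁ = fC D y₂ := mul_left_cancel₀ hμ h3
    have h5 : fC D (y₁ - y₂) = 0 := by rw [hfCsub, h4, sub_self]
    have h6 := fC_eq_zero D hD h5
    exact sub_eq_zero.1 h6
  -- identify the two counts
  have hA : ∀ n : ℕ, ({x | ∃ y : ℤ√(-(D:ℤ)), x = r + m * y} ∩ zFn D n).ncard
      = {y : ℤ√(-(D:ℤ)) | cabs (c + μ * fC D y) < Real.sqrt n}.ncard := by
    intro n
    have himg : {x | ∃ y : ℤ√(-(D:ℤ)), x = r + m * y} ∩ zFn D n
        = (fun y => r + m * y) '' {y | cabs (c + μ * fC D y) < Real.sqrt n} := by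
      ext x
      simp only [Set.mem_inter_iff, Set.mem_setOf_eq, Set.mem_image, zFn]
      constructor
      · rintro ⟨⟨y, rfl⟩, hx⟩
        refine ⟨y, ?_, rfl⟩
        rw [hc, hμdef, ← fC_mul, ← fC_add, abs_fC_lt_iff]
        exact hx
      · rintro ⟨y, hy, rfl⟩
        refine ⟨⟨y, rfl⟩, ?_⟩
        rw [hc, hμdef, ← fC_mul, ← fC_add, abs_fC_lt_iff] at hy
        exact hy
    rw [himg, Set.ncard_image_of_injective _ hinj]
  have hB : ∀ n : ℕ, (zFn D n).ncard
      = {y : ℤ√(-(D:ℤ)) | cabs ((0:ℂ) + 1 * fC D y) < Real.sqrt n}.ncard := by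
    intro n
    congr 1
    ext y
    simp only [zFn, Set.mem_setOf_eq, zero_add, one_mul]
    rw [abs_fC_lt_iff]
  rw [zHasDensity]
  -- the bounding sequences
  set L : ℕ → ℝ := fun n => (Real.sqrt n + (-ρm)) ^ 2 / (Real.sqrt n + ρ1) ^ 2 * (1 / NR)
    with hLdef
  set U : ℕ → ℝ := fun n => (Real.sqrt n + ρm) ^ 2 / (Real.sqrt n + (-ρ1)) ^ 2 * (1 / NR)
    with hUdef
  have hLt : Tendsto L atTop (nhds (1 / NR)) := by
    have h := (tendsto_aux (-ρm) ρ1).mul (tendsto_const_nhds (x := 1 / NR))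
    rw [hLdef]
    simpa using h
  have hUt : Tendsto U atTop (nhds (1 / NR)) := by
    have h := (tendsto_aux ρm (-ρ1)).mul (tendsto_const_nhds (x := 1 / NR))
    rw [hUdef]
    simpa using h
  refine tendsto_of_tendsto_of_tendsto_of_le_of_le' hLt hUt ?_ ?_
  · -- L n ≤ ratio eventually
    filter_upwards [tendsto_sqrt_nat.eventually_ge_atTop (max ρm (ρ1 + 1))] with n hn
    set t : ℝ := Real.sqrt n with htdef
    have ht1 : ρm ≤ t := le_trans (le_max_left _ _) hn
    have ht2 : ρ1 + 1 ≤ t := le_trans (le_max_right _ _) hn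
    obtain ⟨ha1, ha2⟩ := count_real D hD c μ hμ t ht1
    obtain ⟨hb1, hb2⟩ := count_real D hD 0 1 one_ne_zero t (by
      rw [← hρ1]; linarith)
    rw [hNS, ← hρm, ← hV] at ha1 ha2
    rw [Complex.normSq_one, ← hρ1, ← hV, one_mul] at hb1 hb2
    set a : ℝ := (({x | ∃ y : ℤ√(-(D:ℤ)), x = r + m * y} ∩ zFn D n).ncard : ℝ) with hadef
    set b : ℝ := ((zFn D n).ncard : ℝ) with hbdef
    have haS : a = ({y : ℤ√(-(D:ℤ)) | cabs (c + μ * fC D y) < t}.ncard : ℝ) := by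
      rw [hadef, hA n]
    have hbS : b = ({y : ℤ√(-(D:ℤ)) | cabs ((0:ℂ) + 1 * fC D y) < t}.ncard : ℝ) := by
      rw [hbdef, hB n]
    rw [← haS] at ha1 ha2
    rw [← hbS] at hb1 hb2
    have htρ1 : (0:ℝ) < t - ρ1 := by linarith
    have h3 : (t - ρm) ^ 2 * V / (NR * Real.sqrt D) ≤ a := by
      rw [div_le_iff₀ (by positivity)]; exact ha1
    have h4 : b ≤ (t + ρ1) ^ 2 * V / Real.sqrt D := by
      rw [le_div_iff₀ hsD]; exact hb2
    have ha0 : (0:ℝ) ≤ a := by rw [haS]; exact Nat.cast_nonneg _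
    have hb0 : (0:ℝ) < b := by
      have hlow : (t - ρ1) ^ 2 * V / Real.sqrt D ≤ b := by
        rw [div_le_iff₀ hsD]; exact hb1
      have : (0:ℝ) < (t - ρ1) ^ 2 * V / Real.sqrt D := by positivity
      linarith
    have hstep : ((t - ρm) ^ 2 * V / (NR * Real.sqrt D)) / ((t + ρ1) ^ 2 * V / Real.sqrt D)
        ≤ a / b := div_le_div₀ ha0 h3 hb0 h4
    have heq : ((t - ρm) ^ 2 * V / (NR * Real.sqrt D)) / ((t + ρ1) ^ 2 * V / Real.sqrt D)
        = L n := by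
      rw [hLdef]
      have hne1 : t + ρ1 ≠ 0 := by intro h; nlinarith
      have hne2 : NR ≠ 0 := ne_of_gt hNRpos
      have hne3 : Real.sqrt (D:ℝ) ≠ 0 := ne_of_gt hsD
      have hne4 : V ≠ 0 := ne_of_gt hVpos
      rw [ratio_eq _ _ V NR _ (pow_ne_zero 2 hne1) hne2 hne3 hne4]
      ring
    rw [heq] at hstep
    exact hstep
  · -- ratio ≤ U n eventually
    filter_upwards [tendsto_sqrt_nat.eventually_ge_atTop (max ρm (ρ1 + 1))] with n hn
    set t : ℝ := Real.sqrt n with htdef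
    have ht1 : ρm ≤ t := le_trans (le_max_left _ _) hn
    have ht2 : ρ1 + 1 ≤ t := le_trans (le_max_right _ _) hn
    obtain ⟨ha1, ha2⟩ := count_real D hD c μ hμ t ht1
    obtain ⟨hb1, hb2⟩ := count_real D hD 0 1 one_ne_zero t (by
      rw [← hρ1]; linarith)
    rw [hNS, ← hρm, ← hV] at ha1 ha2
    rw [Complex.normSq_one, ← hρ1, ← hV, one_mul] at hb1 hb2
    set a : ℝ := (({x | ∃ y : ℤ√(-(D:ℤ)), x = r + m * y} ∩ zFn D n).ncard : ℝ) with hadef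
    set b : ℝ := ((zFn D n).ncard : ℝ) with hbdef
    have haS : a = ({y : ℤ√(-(D:ℤ)) | cabs (c + μ * fC D y) < t}.ncard : ℝ) := by
      rw [hadef, hA n]
    have hbS : b = ({y : ℤ√(-(D:ℤ)) | cabs ((0:ℂ) + 1 * fC D y) < t}.ncard : ℝ) := by
      rw [hbdef, hB n]
    rw [← haS] at ha1 ha2
    rw [← hbS] at hb1 hb2
    have htρ1 : (0:ℝ) < t - ρ1 := by linarith
    have h1 : a ≤ (t + ρm) ^ 2 * V / (NR * Real.sqrt D) := by
      rw [le_div_iff₀ (by positivity)]; exact ha2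
    have h2 : (t - ρ1) ^ 2 * V / Real.sqrt D ≤ b := by
      rw [div_le_iff₀ hsD]; exact hb1
    have hBpos : (0:ℝ) < (t - ρ1) ^ 2 * V / Real.sqrt D := by positivity
    have hstep : a / b ≤ ((t + ρm) ^ 2 * V / (NR * Real.sqrt D)) / ((t - ρ1) ^ 2 * V / Real.sqrt D) :=
      div_le_div₀ (by positivity) h1 hBpos h2
    have heq : ((t + ρm) ^ 2 * V / (NR * Real.sqrt D)) / ((t - ρ1) ^ 2 * V / Real.sqrt D)
        = U n := by
      rw [hUdef]
      have hne1 : t - ρ1 ≠ 0 := ne_of_gt htρ1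
      have hne2 : NR ≠ 0 := ne_of_gt hNRpos
      have hne3 : Real.sqrt (D:ℝ) ≠ 0 := ne_of_gt hsD
      have hne4 : V ≠ 0 := ne_of_gt hVpos
      rw [ratio_eq _ _ V NR _ (pow_ne_zero 2 hne1) hne2 hne3 hne4]
      ring
    rw [heq] at hstep
    exact hstep
end
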